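/- arXiv:2109.11565 — 11 statements merged into one kernel-verified Lean document; each statement's English description precedes it below -/
import Mathlib

section
/- Let M be a matroid on ground set E with no loops and no coloops. If F is a nonempty flat of M and G is a nonempty flat of the dual matroid M*, then |F ∪ G| ≠ |E| − 1. -/
open Set

variable {α : Type*}

namespace Matroid

/-- A circuit: a minimal dependent set. -/
def Circuit' (M : Matroid α) (C : Set α) : Prop :=
  C ⊆ M.E ∧ ¬ M.Indep C ∧ ∀ D, D ⊂ C → M.Indep D

/-- `M` has no loops. -/
def NoLoops (M : Matroid α) : Prop := ∀ e ∈ M.E, M.Indep {e}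

/-- `M` has no coloops. -/
def NoColoops (M : Matroid α) : Prop := ∀ e ∈ M.E, M✶.Indep {e}

/-- A biflat of `M`. -/
def IsBiflat (M : Matroid α) (p : Set α × Set α) : Prop :=
  M.IsFlat p.1 ∧ M✶.IsFlat p.2 ∧ p.1.Nonempty ∧ p.2.Nonempty ∧
    ¬ (p.1 = M.E ∧ p.2 = M.E) ∧ p.1 ∪ p.2 = M.E

/-- Compatibility of biflats. -/
def BiflatCompatible (p q : Set α × Set α) : Prop :=
  (p.1 ⊆ q.1 ∧ q.2 ⊆ p.2) ∨ (q.1 ⊆ p.1 ∧ p.2 ⊆ q.2)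

/-- A biflag of `M`, as a set of biflats. -/
def IsBiflag (M : Matroid α) (S : Set (Set α × Set α)) : Prop :=
  (∀ p ∈ S, M.IsBiflat p) ∧ (∀ p ∈ S, ∀ q ∈ S, BiflatCompatible p q) ∧
    (⋃ p ∈ S, p.1 ∩ p.2) ≠ M.E

/-- Externally active element. -/
def ExtActive [LinearOrder α] (M : Matroid α) (B : Set α) (i : α) : Prop :=
  i ∈ M.E \ B ∧ ∃ C, M.Circuit' C ∧ C ⊆ insert i B ∧ IsLeast C i

/-- Internally active element. -/
def IntActive [LinearOrder α] (M : Matroid α) (B : Set α) (i : α) : Prop :=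
  i ∈ B ∧ ∃ C, M✶.Circuit' C ∧ C ⊆ insert i (M.E \ B) ∧ IsLeast C i

/-- Lexicographic comparison of finite subsets of a linear order. -/
def LexLE [LinearOrder α] (A B : Set α) : Prop :=
  A = B ∨ ∃ e, IsLeast ((A \ B) ∪ (B \ A)) e ∧ e ∈ A

lemma key_dual (M : Matroid α) {X : Set α} {e : α} (hX : X ⊆ M.E) (he : e ∈ M.E)
    (hecl : e ∉ M.closure X) : e ∈ M✶.closure (M.E \ insert e X) := by
  have heX : e ∉ X := fun h => hecl (M.subset_closure X hX h)
  set Y : Set α := M.E \ insert e X with hY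
  -- basis of X
  obtain ⟨I, hI⟩ := M.exists_isBasis X hX
  have heI : e ∉ M.closure I := by rwa [hI.closure_eq_closure]
  have heI' : e ∉ I := fun h => heX (hI.subset h)
  have hins : M.Indep (insert e I) := ((hI.indep.notMem_closure_iff he).1 heI).1
  -- insert e I is a basis of insert e X
  have hbas : M.IsBasis (insert e I) (insert e X) := by
    refine hins.isBasis_of_subset_of_subset_closure (insert_subset_insert hI.subset) ?_
    refine insert_subset (M.subset_closure _ hins.subset_ground (mem_insert _ _)) ?_
    exact (hI.subset_closure).trans (M.closure_subset_closure (subset_insert _ _))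
  -- extend to a base B
  obtain ⟨B, hB, hIB⟩ := hins.exists_isBase_superset
  have hBinter : B ∩ insert e X = insert e I := by
    refine (hbas.eq_of_subset_indep (hB.indep.subset inter_subset_left)
      (subset_inter hIB (insert_subset_insert hI.subset)) inter_subset_right).symm
  set J : Set α := Y \ B with hJ
  have hJY : J ⊆ Y := diff_subset
  have hYE : Y ⊆ M.E := diff_subset
  have hJB : Disjoint J B := disjoint_sdiff_left
  -- main claim: for g ∈ B with (insert e X) \ {g} ⊆ closure (B \ {g}),
  -- insert g J is dual-dependent
  have haux : ∀ g ∈ B, (insert e X) \ {g} ⊆ M.closure (B \ {g}) →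
      ¬ M✶.Indep (insert g J) := by
    intro g hgB hsub hind
    obtain ⟨hJE, B₂, hB₂, hdj⟩ := dual_indep_iff_exists'.1 hind
    have hgE : g ∈ M.E := hB.subset_ground hgB
    have hB₂sub : B₂ ⊆ M.closure (B \ {g}) := by
      intro x hx
      have hxE : x ∈ M.E := hB₂.subset_ground hx
      have hxg : x ≠ g := fun h => (hdj.subset_compl_left hx) (h ▸ mem_insert _ _)
      have hxJ : x ∉ J := fun h => (hdj.subset_compl_left hx) (mem_insert_of_mem _ h)
      by_cases hxY : x ∈ Y
      · -- then x ∈ B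
        have hxB : x ∈ B := by
          by_contra hxB
          exact hxJ ⟨hxY, hxB⟩
        exact M.subset_closure _ (diff_subset.trans hB.subset_ground) ⟨hxB, hxg⟩
      · have : x ∈ insert e X := by
          by_contra hxi
          exact hxY ⟨hxE, hxi⟩
        exact hsub ⟨this, hxg⟩
    have : M.E ⊆ M.closure (B \ {g}) := by
      rw [← hB₂.closure_eq]
      exact closure_subset_closure_of_subset_closure hB₂sub
    have hgcl : g ∈ M.closure (B \ {g}) := this hgE
    have hBi : M.Indep (insert g (B \ {g})) := by
      rw [insert_diff_singleton, insert_eq_of_mem hgB]; exact hB.indep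
    have hgd : g ∉ B \ {g} := fun h => h.2 rfl
    exact (((hB.indep.subset diff_subset).notMem_closure_iff_of_notMem hgd hgE).2 hBi) hgcl
  -- J is dual-independent
  have hJind : M✶.Indep J := dual_indep_iff_exists'.2 ⟨hJY.trans hYE, B, hB, hJB⟩
  -- J is a dual basis of Y
  have hJbas : M✶.IsBasis J Y := by
    refine hJind.isBasis_of_subset_of_subset_closure hJY ?_
    intro f hf
    by_cases hfJ : f ∈ J
    · exact M✶.subset_closure J (hJY.trans hYE) hfJ
    have hfB : f ∈ B := by
      by_contra hfB
      exact hfJ ⟨hf, hfB⟩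
    have hfe : f ≠ e := fun h => hf.2 (h ▸ mem_insert _ _)
    have hsub : (insert e X) \ {f} ⊆ M.closure (B \ {f}) := by
      have h1 : insert e I ⊆ B \ {f} := by
        refine subset_diff_singleton hIB (fun hfI => hf.2 ?_)
        rw [← hBinter] at hfI
        exact hfI.2
      calc (insert e X) \ {f} ⊆ insert e X := diff_subset
        _ ⊆ M.closure (insert e I) := hbas.subset_closure
        _ ⊆ M.closure (B \ {f}) := M.closure_subset_closure h1
    have hdep : M✶.Dep (insert f J) := by
      rw [dep_iff]
      exact ⟨haux f hfB hsub, insert_subset (hYE hf) (hJY.trans hYE)⟩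
    exact (hJind.mem_closure_iff).2 (Or.inl hdep)
  -- now e
  rw [← hJbas.closure_eq_closure]
  have heB : e ∈ B := hIB (mem_insert _ _)
  have hsub : (insert e X) \ {e} ⊆ M.closure (B \ {e}) := by
    have h1 : I ⊆ B \ {e} :=
      subset_diff_singleton ((subset_insert _ _).trans hIB) heI'
    intro x hx
    have hxX : x ∈ X := by
      rcases hx.1 with h | h
      · exact absurd h hx.2
      · exact h
    exact (M.closure_subset_closure h1) (hI.subset_closure hxX)
  have hdep : M✶.Dep (insert e J) := by
    rw [dep_iff]
    exact ⟨haux e heB hsub, insert_subset he (hJY.trans hYE)⟩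
  exact (hJind.mem_closure_iff).2 (Or.inl hdep)

/-- If `M` has no loops and no coloops, `F` is a nonempty flat of `M` and `G` a nonempty flat
of `M✶`, then `|F ∪ G| ≠ |E| - 1`. -/
theorem stmt0 (M : Matroid α) (hE : M.E.Finite) (h0 : M.NoLoops) (h1 : M.NoColoops)
    (F G : Set α) (hF : M.IsFlat F) (hFne : F.Nonempty) (hG : M✶.IsFlat G) (hGne : G.Nonempty) :
    (F ∪ G).ncard ≠ M.E.ncard - 1 := by
  intro h
  have hFE : F ⊆ M.E := hF.subset_ground
  have hGE : G ⊆ M.E := hG.subset_ground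
  have hUE : F ∪ G ⊆ M.E := union_subset hFE hGE
  obtain ⟨f, hf⟩ := hFne
  have hEne : M.E.Nonempty := ⟨f, hFE hf⟩
  have hpos : 1 ≤ M.E.ncard := (Set.ncard_pos hE).2 ⟨f, hFE hf⟩
  have hcard : (M.E \ (F ∪ G)).ncard = 1 := by
    rw [Set.ncard_diff hUE (hE.subset hUE), h]
    omega
  obtain ⟨e, he⟩ := Set.ncard_eq_one.1 hcard
  have heE : e ∈ M.E := (diff_subset (t := F ∪ G)) (he ▸ mem_singleton e)
  have heFG : e ∉ F ∪ G := ((he ▸ mem_singleton e : e ∈ M.E \ (F ∪ G))).2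
  have heF : e ∉ F := fun hh => heFG (Or.inl hh)
  have heG : e ∉ G := fun hh => heFG (Or.inr hh)
  have hecl : e ∉ M.closure F := by rw [hF.closure]; exact heF
  have hkey := M.key_dual hFE heE hecl
  have hsub : M.E \ insert e F ⊆ G := by
    intro x hx
    by_contra hxG
    have hxd : x ∈ M.E \ (F ∪ G) :=
      ⟨hx.1, fun hh => hh.elim (fun h1 => hx.2 (mem_insert_of_mem _ h1)) hxG⟩
    rw [he] at hxd
    exact hx.2 (hxd ▸ mem_insert _ _)
  have heG' : e ∈ G := by
    have := (M✶.closure_subset_closure hsub) hkey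
    rwa [hG.closure] at this
  exact heG heG'


end Matroid
end

section
/- Let M be a loopless, coloopless matroid of rank r+1 on a ground set E of size n+1. Every maximal biflag of M has length n−1. -/
open Set

variable {α : Type*}

namespace Matroid

lemma flat_closure' (M : Matroid α) (X : Set α) : M.IsFlat (M.closure X) := by
  rw [closure_def]
  haveI hne : Nonempty ↥{F : Set α | M.IsFlat F ∧ X ∩ M.E ⊆ F} :=
    ⟨⟨M.E, M.ground_isFlat, inter_subset_right⟩⟩
  rw [sInter_eq_iInter]
  exact IsFlat.iInter fun F => F.2.1

/-- Integer-valued rank. -/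
noncomputable def zrk (N : Matroid α) (X : Set α) : ℤ := ((N.exists_isBasis' X).choose.ncard : ℤ)

lemma zrk_eq_of_basis' {N : Matroid α} {I X : Set α} (h : N.IsBasis' I X) :
    zrk N X = I.ncard := by
  have h2 := (N.exists_isBasis' X).choose_spec.encard_eq_encard h
  unfold zrk
  rw [Set.ncard_def, h2, ← Set.ncard_def]

lemma zrk_eq_of_basis {N : Matroid α} {I X : Set α} (h : N.IsBasis I X) :
    zrk N X = I.ncard :=
  zrk_eq_of_basis' h.isBasis'

lemma zrk_nonneg (N : Matroid α) (X : Set α) : 0 ≤ zrk N X := by unfold zrk; exact Int.natCast_nonneg _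

lemma zrk_nonempty {N : Matroid α} {X : Set α} (h : 0 < zrk N X) : X.Nonempty := by
  rw [nonempty_iff_ne_empty]
  rintro rfl
  obtain ⟨I, hI⟩ := N.exists_isBasis' (∅ : Set α)
  have : I = ∅ := subset_empty_iff.1 hI.subset
  rw [zrk_eq_of_basis' hI, this] at h
  simp at h

lemma zrk_closure (N : Matroid α) (X : Set α) : zrk N (N.closure X) = zrk N X := by
  obtain ⟨I, hI⟩ := N.exists_isBasis' X
  rw [zrk_eq_of_basis hI.isBasis_closure_right, zrk_eq_of_basis' hI]

lemma zrk_closure_empty (N : Matroid α) : zrk N (N.closure ∅) = 0 := by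
  rw [zrk_closure]
  obtain ⟨I, hI⟩ := N.exists_isBasis' (∅ : Set α)
  have : I = ∅ := subset_empty_iff.1 hI.subset
  rw [zrk_eq_of_basis' hI, this]
  simp

lemma zrk_mono (N : Matroid α) {X Y : Set α} (hXY : X ⊆ Y) (hY : Y ⊆ N.E)
    (hfin : Y.Finite) : zrk N X ≤ zrk N Y := by
  obtain ⟨I, hI⟩ := N.exists_isBasis X (hXY.trans hY)
  obtain ⟨J, hJ, hIJ⟩ := hI.indep.subset_isBasis_of_subset (hI.subset.trans hXY) hY
  rw [zrk_eq_of_basis hI, zrk_eq_of_basis hJ]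
  exact_mod_cast Set.ncard_le_ncard hIJ (hfin.subset hJ.subset)

lemma zrk_lt_of_flat_ssubset {N : Matroid α} (hfin : N.E.Finite) {F F' : Set α}
    (hF : N.IsFlat F) (hF' : N.IsFlat F') (hss : F ⊆ F') (hne : F ≠ F') :
    zrk N F < zrk N F' := by
  obtain ⟨I, hI⟩ := N.exists_isBasis F hF.subset_ground
  obtain ⟨J, hJ, hIJ⟩ := hI.indep.subset_isBasis_of_subset (hI.subset.trans hss) hF'.subset_ground
  rw [zrk_eq_of_basis hI, zrk_eq_of_basis hJ]
  have hJfin : J.Finite := hfin.subset hJ.indep.subset_ground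
  have hle : I.ncard ≤ J.ncard := Set.ncard_le_ncard hIJ hJfin
  rcases lt_or_eq_of_le hle with h | h
  · exact_mod_cast h
  · exfalso
    apply hne
    have hIJ' : I = J := Set.eq_of_subset_of_ncard_le hIJ h.ge hJfin
    have h1 : F' ⊆ N.closure J := hJ.subset_closure
    rw [← hIJ'] at h1
    have h2 : N.closure I = F := by rw [hI.closure_eq_closure, hF.closure]
    exact hss.antisymm (h1.trans h2.subset)

lemma zrk_pos_of_nonloop {N : Matroid α} (hfin : N.E.Finite) {F : Set α}
    (hF : N.IsFlat F) {x : α} (hx : x ∈ F) (hxi : N.Indep {x}) : 1 ≤ zrk N F := by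
  obtain ⟨J, hJ, hIJ⟩ := hxi.subset_isBasis_of_subset (singleton_subset_iff.2 hx)
    hF.subset_ground
  rw [zrk_eq_of_basis hJ]
  have hJfin : J.Finite := hfin.subset hJ.indep.subset_ground
  have : J.Nonempty := ⟨x, hIJ rfl⟩
  exact_mod_cast (Set.ncard_pos hJfin).2 this

lemma exists_flat_between {N : Matroid α} (hfin : N.E.Finite) {F F' : Set α}
    (hF : N.IsFlat F) (hF' : N.IsFlat F') (hss : F ⊆ F') {e : α} (heF' : e ∈ F') (heF : e ∉ F)
    (hgap : zrk N F + 2 ≤ zrk N F') :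
    ∃ F'', N.IsFlat F'' ∧ F ⊆ F'' ∧ F'' ⊆ F' ∧ e ∉ F'' ∧
      zrk N F < zrk N F'' ∧ zrk N F'' < zrk N F' := by
  obtain ⟨I, hI⟩ := N.exists_isBasis F hF.subset_ground
  have heI : e ∉ I := fun h => heF (hI.subset h)
  have hclIF : N.closure I = F := by rw [hI.closure_eq_closure, hF.closure]
  have hins : N.Indep (insert e I) := by
    rw [hI.indep.insert_indep_iff_of_notMem heI]
    exact ⟨hF'.subset_ground heF', by rw [hclIF]; exact heF⟩
  obtain ⟨J, hJ, hIJ⟩ := hins.subset_isBasis_of_subset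
    (insert_subset heF' (hI.subset.trans hss)) hF'.subset_ground
  have heJ : e ∈ J := hIJ (mem_insert _ _)
  have hJfin : J.Finite := hfin.subset hJ.indep.subset_ground
  have hIsub : I ⊆ J \ {e} :=
    subset_diff_singleton (((subset_insert _ _).trans hIJ)) heI
  have hflat : N.IsFlat (N.closure (J \ {e})) := flat_closure' N _
  have hrk1 : zrk N (N.closure (J \ {e})) = ((J \ {e}).ncard : ℤ) := by
    rw [zrk_closure]
    exact zrk_eq_of_basis (hJ.indep.subset diff_subset).isBasis_self
  have hrk2 : zrk N F' = (J.ncard : ℤ) := zrk_eq_of_basis hJ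
  have hcard : (J \ {e}).ncard + 1 = J.ncard := Set.ncard_diff_singleton_add_one heJ hJfin
  have hrkF : zrk N F = (I.ncard : ℤ) := zrk_eq_of_basis hI
  have hcard2 : I.ncard ≤ (J \ {e}).ncard :=
    Set.ncard_le_ncard hIsub (hJfin.subset diff_subset)
  refine ⟨N.closure (J \ {e}), hflat, ?_, ?_, ?_, ?_, ?_⟩
  · calc F = N.closure I := hclIF.symm
    _ ⊆ _ := N.closure_subset_closure hIsub
  · have h1 : J \ {e} ⊆ F' := diff_subset.trans hJ.subset
    exact (N.closure_subset_closure h1).trans hF'.closure.subset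
  · exact hJ.indep.notMem_closure_sdiff_of_mem heJ
  · rw [hrk1, hrkF]; omega
  · rw [hrk1, hrk2]; omega

open Classical in
/-- The dimension function on biflats. -/
noncomputable def psi (M : Matroid α) (e : α) (p : Set α × Set α) : ℤ :=
  zrk M p.1 + zrk M✶ M.E - zrk M✶ p.2 - (if e ∈ p.1 then 1 else 0)

lemma psi_of_mem {M : Matroid α} {e : α} {p : Set α × Set α} (h : e ∈ p.1) :
    psi M e p = zrk M p.1 + zrk M✶ M.E - zrk M✶ p.2 - 1 := by
  rw [psi, if_pos h]

lemma psi_of_not_mem {M : Matroid α} {e : α} {p : Set α × Set α} (h : e ∉ p.1) :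
    psi M e p = zrk M p.1 + zrk M✶ M.E - zrk M✶ p.2 := by
  rw [psi, if_neg h]; ring

/-- Every maximal biflag of a loopless, coloopless matroid of rank `r+1` on `n+1` elements
has length `n - 1`. -/
theorem stmt1 (M : Matroid α) (n r : ℕ) (hE : M.E.Finite) (hcard : M.E.ncard = n + 1)
    (hrank : ∃ B, M.IsBase B ∧ B.ncard = r + 1)
    (h0 : M.NoLoops) (h1 : M.NoColoops)
    (S : Set (Set α × Set α)) (hS : M.IsBiflag S)
    (hmax : ∀ T, M.IsBiflag T → S ⊆ T → S = T) :
    S.ncard = n - 1 := by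

  classical
  obtain ⟨B, hB, hBcard⟩ := hrank
  have hBE : B ⊆ M.E := hB.subset_ground
  have hdE : M✶.E = M.E := M.dual_ground
  have hdfin : M✶.E.Finite := by rw [hdE]; exact hE
  have hEfl : M.IsFlat M.E := M.ground_isFlat
  have hgfd : M✶.IsFlat M.E := by rw [← hdE]; exact M✶.ground_isFlat
  have haval : zrk M M.E = (r : ℤ) + 1 := by
    rw [zrk_eq_of_basis hB.isBasis_ground, hBcard]; push_cast; ring
  have hdval : zrk M✶ M.E = ((M.E \ B).ncard : ℤ) := by
    rw [← hdE]; exact zrk_eq_of_basis (hB.compl_isBase_dual).isBasis_ground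
  have hcardsum : (M.E \ B).ncard + B.ncard = M.E.ncard :=
    Set.ncard_diff_add_ncard_of_subset hBE hE
  have hbsum : zrk M M.E + zrk M✶ M.E = (n : ℤ) + 1 := by
    rw [haval, hdval]
    have h9 : (M.E \ B).ncard + (r + 1) = n + 1 := by rw [← hBcard, hcardsum, hcard]
    push_cast
    omega
  -- ground set nonempty, witness element
  have hEne : M.E.Nonempty := (Set.ncard_pos hE).1 (by omega)
  have hUsub : (⋃ p ∈ S, p.1 ∩ p.2) ⊆ M.E := by
    refine iUnion₂_subset fun p hp => ?_
    exact inter_subset_left.trans (hS.1 p hp).1.subset_ground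
  obtain ⟨e, heE, heU⟩ : ∃ e, e ∈ M.E ∧ e ∉ ⋃ p ∈ S, p.1 ∩ p.2 := by
    obtain ⟨e, he1, he2⟩ := exists_of_ssubset (hUsub.ssubset_of_ne hS.2.2)
    exact ⟨e, he1, he2⟩
  have hw : ∀ p ∈ S, e ∉ p.1 ∩ p.2 := fun p hp hmem => heU (mem_biUnion hp hmem)
  -- basic rank facts
  have ha1 : 1 ≤ zrk M M.E := by rw [haval]; omega
  have hb1 : 1 ≤ zrk M✶ M.E :=
    zrk_pos_of_nonloop hdfin hgfd heE (h1 e heE)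
  have hn1 : 1 ≤ n := by
    have h2 : 2 ≤ zrk M✶ M.E + zrk M M.E := by omega
    omega
  -- helpers
  have hclbot : ∀ F, M.IsFlat F → M.closure ∅ ⊆ F := fun F hF => by
    have := M.closure_subset_closure (empty_subset F)
    rwa [hF.closure] at this
  have hclbotd : ∀ G, M✶.IsFlat G → M✶.closure ∅ ⊆ G := fun G hG => by
    have := M✶.closure_subset_closure (empty_subset G)
    rwa [hG.closure] at this
  have heclO : e ∉ M.closure ∅ := by
    have h2 := (h0 e heE).notMem_closure_sdiff_of_mem (mem_singleton e)
    simpa using h2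
  have heclOd : e ∉ M✶.closure ∅ := by
    have h2 := (h1 e heE).notMem_closure_sdiff_of_mem (mem_singleton e)
    simpa using h2
  have hmk : ∀ F G : Set α, M.IsFlat F → M✶.IsFlat G → F.Nonempty → G.Nonempty →
      (F ≠ M.E ∨ G ≠ M.E) → M.E ⊆ F ∪ G → M.IsBiflat (F, G) := by
    intro F G hF hG hFne hGne hne hsub
    have hGE : G ⊆ M.E := by have := hG.subset_ground; rwa [hdE] at this
    refine ⟨hF, hG, hFne, hGne, ?_,
      (union_subset hF.subset_ground hGE).antisymm hsub⟩
    rintro ⟨hhF, hhG⟩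
    rcases hne with h | h
    · exact h hhF
    · exact h hhG
  have hnefst : ∀ x y : Set α × Set α, zrk M x.1 ≠ zrk M y.1 → x ≠ y :=
    fun x y h hxy => h (by rw [hxy])
  have hnesnd : ∀ x y : Set α × Set α, zrk M✶ x.2 ≠ zrk M✶ y.2 → x ≠ y :=
    fun x y h hxy => h (by rw [hxy])
  -- basic facts about witnessed biflats
  have hfacts : ∀ p : Set α × Set α, M.IsBiflat p → e ∉ p.1 ∩ p.2 →
      1 ≤ zrk M p.1 ∧ zrk M p.1 ≤ zrk M M.E ∧ 1 ≤ zrk M✶ p.2 ∧ zrk M✶ p.2 ≤ zrk M✶ M.E ∧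
      (e ∈ p.1 → e ∉ p.2 ∧ zrk M✶ p.2 < zrk M✶ M.E) ∧
      (e ∉ p.1 → e ∈ p.2 ∧ zrk M p.1 < zrk M M.E) := by
    intro p hp hwp
    obtain ⟨hf1, hf2, hne1, hne2, hnb, hun⟩ := hp
    obtain ⟨x1, hx1⟩ := hne1
    obtain ⟨x2, hx2⟩ := hne2
    have hsub2 : p.2 ⊆ M.E := by have := hf2.subset_ground; rwa [hdE] at this
    have hg1 : 1 ≤ zrk M p.1 := zrk_pos_of_nonloop hE hf1 hx1 (h0 x1 (hf1.subset_ground hx1))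
    have hg2 : zrk M p.1 ≤ zrk M M.E := zrk_mono M hf1.subset_ground Subset.rfl hE
    have hg3 : 1 ≤ zrk M✶ p.2 := zrk_pos_of_nonloop hdfin hf2 hx2 (h1 x2 (hsub2 hx2))
    have hg4 : zrk M✶ p.2 ≤ zrk M✶ M.E := by
      have := zrk_mono M✶ hf2.subset_ground Subset.rfl hdfin
      rwa [hdE] at this
    refine ⟨hg1, hg2, hg3, hg4, fun hin => ?_, fun hout => ?_⟩
    · have hnp2 : e ∉ p.2 := fun h => hwp ⟨hin, h⟩
      have hne' : p.2 ≠ M.E := fun h => hnp2 (by rw [h]; exact heE)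
      exact ⟨hnp2, zrk_lt_of_flat_ssubset hdfin hf2 hgfd hsub2 hne'⟩
    · have hin2 : e ∈ p.2 := by
        have h2 : e ∈ p.1 ∪ p.2 := by rw [hun]; exact heE
        rcases h2 with h2 | h2
        · exact absurd h2 hout
        · exact h2
      have hne' : p.1 ≠ M.E := fun h => hout (by rw [h]; exact heE)
      exact ⟨hin2, zrk_lt_of_flat_ssubset hE hf1 hEfl hf1.subset_ground hne'⟩
  -- range of psi
  have hrange : ∀ p, M.IsBiflat p → e ∉ p.1 ∩ p.2 →
      1 ≤ psi M e p ∧ psi M e p ≤ zrk M M.E + zrk M✶ M.E - 2 := by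
    intro p hp hwp
    obtain ⟨hg1, hg2, hg3, hg4, himp1, himp2⟩ := hfacts p hp hwp
    by_cases hcase : e ∈ p.1
    · obtain ⟨-, hlt⟩ := himp1 hcase
      rw [psi_of_mem hcase]
      omega
    · obtain ⟨-, hlt⟩ := himp2 hcase
      rw [psi_of_not_mem hcase]
      omega
  -- strict monotonicity of psi
  have hmono : ∀ p q : Set α × Set α, M.IsBiflat p → e ∉ p.1 ∩ p.2 →
      M.IsBiflat q → e ∉ q.1 ∩ q.2 → p.1 ⊆ q.1 → q.2 ⊆ p.2 → p ≠ q →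
      psi M e p < psi M e q := by
    intro p q hp hwp hq hwq h12 h21 hne
    have hsubp2 : p.2 ⊆ M✶.E := hp.2.1.subset_ground
    have hFm : zrk M p.1 ≤ zrk M q.1 := zrk_mono M h12 hq.1.subset_ground (hE.subset hq.1.subset_ground)
    have hGm : zrk M✶ q.2 ≤ zrk M✶ p.2 := zrk_mono M✶ h21 hsubp2 (hdfin.subset hsubp2)
    by_cases he1 : e ∈ p.1
    · have he2 : e ∈ q.1 := h12 he1
      rw [psi_of_mem he1, psi_of_mem he2]
      rcases eq_or_ne p.1 q.1 with hFF | hFF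
      · have hGG : q.2 ≠ p.2 := fun h => hne (Prod.ext hFF h.symm)
        have := zrk_lt_of_flat_ssubset hdfin hq.2.1 hp.2.1 h21 hGG
        rw [hFF]
        omega
      · have := zrk_lt_of_flat_ssubset hE hp.1 hq.1 h12 hFF
        omega
    · by_cases he2 : e ∈ q.1
      · -- transition
        have hep2 : e ∈ p.2 := (hfacts p hp hwp).2.2.2.2.2 he1 |>.1
        have heq2 : e ∉ q.2 := fun h => hwq ⟨he2, h⟩
        have hFF : p.1 ≠ q.1 := fun h => he1 (by rw [h]; exact he2)
        have hGG : q.2 ≠ p.2 := fun h => heq2 (by rw [h]; exact hep2)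
        have hsF := zrk_lt_of_flat_ssubset hE hp.1 hq.1 h12 hFF
        have hsG := zrk_lt_of_flat_ssubset hdfin hq.2.1 hp.2.1 h21 hGG
        rw [psi_of_not_mem he1, psi_of_mem he2]
        omega
      · rw [psi_of_not_mem he1, psi_of_not_mem he2]
        rcases eq_or_ne p.1 q.1 with hFF | hFF
        · have hGG : q.2 ≠ p.2 := fun h => hne (Prod.ext hFF h.symm)
          have := zrk_lt_of_flat_ssubset hdfin hq.2.1 hp.2.1 h21 hGG
          rw [hFF]
          omega
        · have := zrk_lt_of_flat_ssubset hE hp.1 hq.1 h12 hFF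
          omega
  -- extension contradiction
  have hext : ∀ x : Set α × Set α, M.IsBiflat x → e ∉ x.1 ∩ x.2 →
      (∀ s ∈ S, BiflatCompatible x s) → x ∉ S → False := by
    intro x hx hwx hcomp hxS
    have hT : M.IsBiflag (insert x S) := by
      refine ⟨?_, ?_, ?_⟩
      · intro p hp
        rcases mem_insert_iff.1 hp with rfl | hp
        · exact hx
        · exact hS.1 p hp
      · intro p hp q hq
        rcases mem_insert_iff.1 hp with hpx | hp'
        · rcases mem_insert_iff.1 hq with hqx | hq'
          · rw [hpx, hqx]; exact Or.inl ⟨Subset.rfl, Subset.rfl⟩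
          · rw [hpx]; exact hcomp q hq'
        · rcases mem_insert_iff.1 hq with hqx | hq'
          · rw [hqx]
            rcases hcomp p hp' with h | h
            · exact Or.inr h
            · exact Or.inl h
          · exact hS.2.1 p hp' q hq'
      · intro hEq
        have heU' : e ∈ ⋃ p ∈ insert x S, p.1 ∩ p.2 := by rw [hEq]; exact heE
        rw [mem_iUnion₂] at heU'
        obtain ⟨p, hp, hep⟩ := heU'
        rcases mem_insert_iff.1 hp with rfl | hp
        · exact hwx hep
        · exact hw p hp hep
    have h2 := hmax _ hT (subset_insert _ _)
    exact hxS (by rw [h2]; exact mem_insert x S)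
  -- bottom extension
  have hbottom : ∀ p, M.IsBiflat p → e ∉ p.1 ∩ p.2 → 2 ≤ psi M e p →
      ∃ x, M.IsBiflat x ∧ e ∉ x.1 ∩ x.2 ∧ x.1 ⊆ p.1 ∧ p.2 ⊆ x.2 ∧ x ≠ p := by
    intro p hp hwp hpsi
    obtain ⟨hg1, hg2, hg3, hg4, himp1, himp2⟩ := hfacts p hp hwp
    have hsub2 : p.2 ⊆ M.E := by have := hp.2.1.subset_ground; rwa [hdE] at this
    by_cases hcase : e ∈ p.1
    · obtain ⟨hep2, hlt4⟩ := himp1 hcase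
      rw [psi_of_mem hcase] at hpsi
      by_cases h2 : 2 ≤ zrk M p.1
      · obtain ⟨F0, hF0f, -, hF0sub, heF0, hF0lb, hF0ub⟩ :=
          exists_flat_between hE (flat_closure' M ∅) hp.1 (hclbot _ hp.1) hcase heclO
            (by rw [zrk_closure_empty]; omega)
        rw [zrk_closure_empty] at hF0lb
        exact ⟨(F0, M.E), hmk F0 M.E hF0f hgfd (zrk_nonempty hF0lb) hEne
          (Or.inl fun h => heF0 (by rw [h]; exact heE)) subset_union_right,
          fun hm => heF0 hm.1, hF0sub, hsub2, hnesnd _ _ (ne_of_gt hlt4)⟩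
      · have hgap : zrk M✶ p.2 + 2 ≤ zrk M✶ M.E := by omega
        obtain ⟨G', hG'f, hG's1, hG's2, heG', hG'lb, hG'ub⟩ :=
          exists_flat_between hdfin hp.2.1 hgfd hsub2 heE hep2 hgap
        refine ⟨(p.1, G'), hmk p.1 G' hp.1 hG'f hp.2.2.1 (hp.2.2.2.1.mono hG's1)
          (Or.inr fun h => heG' (by rw [h]; exact heE)) ?_,
          fun hm => heG' hm.2, Subset.rfl, hG's1, hnesnd _ _ (ne_of_gt hG'lb)⟩
        rw [← hp.2.2.2.2.2]; exact union_subset_union_right _ hG's1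
    · obtain ⟨hep2, hlt2⟩ := himp2 hcase
      rw [psi_of_not_mem hcase] at hpsi
      by_cases hGE : p.2 = M.E
      · have hzG : zrk M✶ p.2 = zrk M✶ M.E := by rw [hGE]
        have h2 : 2 ≤ zrk M p.1 := by omega
        have hnsub : ¬ p.1 ⊆ M.closure ∅ := by
          intro h
          have := zrk_mono M h (M.closure_subset_ground ∅)
            (hE.subset (M.closure_subset_ground ∅))
          rw [zrk_closure_empty] at this
          omega
        obtain ⟨x0, hx01, hx02⟩ := not_subset.1 hnsub
        obtain ⟨F0, hF0f, -, hF0sub, -, hF0lb, hF0ub⟩ :=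
          exists_flat_between hE (flat_closure' M ∅) hp.1 (hclbot _ hp.1) hx01 hx02
            (by rw [zrk_closure_empty]; omega)
        rw [zrk_closure_empty] at hF0lb
        exact ⟨(F0, M.E), hmk F0 M.E hF0f hgfd (zrk_nonempty hF0lb) hEne
          (Or.inl fun h => hcase (hF0sub (by rw [h]; exact heE))) subset_union_right,
          fun hm => hcase (hF0sub hm.1), hF0sub, hsub2, hnefst _ _ (ne_of_lt hF0ub)⟩
      · exact ⟨(p.1, M.E), hmk p.1 M.E hp.1 hgfd hp.2.2.1 hEne
          (Or.inl fun h => hcase (by rw [h]; exact heE)) subset_union_right,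
          fun hm => hcase hm.1, Subset.rfl, hsub2,
          hnesnd _ _ (ne_of_gt (zrk_lt_of_flat_ssubset hdfin hp.2.1 hgfd hsub2 hGE))⟩
  -- top extension
  have htop : ∀ p, M.IsBiflat p → e ∉ p.1 ∩ p.2 →
      psi M e p ≤ zrk M M.E + zrk M✶ M.E - 3 →
      ∃ x, M.IsBiflat x ∧ e ∉ x.1 ∩ x.2 ∧ p.1 ⊆ x.1 ∧ x.2 ⊆ p.2 ∧ x ≠ p := by
    intro p hp hwp hpsi
    obtain ⟨hg1, hg2, hg3, hg4, himp1, himp2⟩ := hfacts p hp hwp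
    have hsub2 : p.2 ⊆ M.E := by have := hp.2.1.subset_ground; rwa [hdE] at this
    by_cases hcase : e ∈ p.1
    · obtain ⟨hep2, hlt4⟩ := himp1 hcase
      rw [psi_of_mem hcase] at hpsi
      by_cases hFa : zrk M p.1 < zrk M M.E
      · exact ⟨(M.E, p.2), hmk M.E p.2 hEfl hp.2.1 hEne hp.2.2.2.1
          (Or.inr fun h => hep2 (by rw [h]; exact heE)) subset_union_left,
          fun hm => hep2 hm.2, hp.1.subset_ground, Subset.rfl, hnefst _ _ (ne_of_gt hFa)⟩
      · have hG2 : 2 ≤ zrk M✶ p.2 := by omega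
        have hnsub : ¬ p.2 ⊆ M✶.closure ∅ := by
          intro h
          have := zrk_mono M✶ h (M✶.closure_subset_ground ∅)
            (hdfin.subset (M✶.closure_subset_ground ∅))
          rw [zrk_closure_empty] at this
          omega
        obtain ⟨x0, hx01, hx02⟩ := not_subset.1 hnsub
        obtain ⟨G0, hG0f, -, hG0sub, -, hG0lb, hG0ub⟩ :=
          exists_flat_between hdfin (flat_closure' M✶ ∅) hp.2.1 (hclbotd _ hp.2.1) hx01 hx02
            (by rw [zrk_closure_empty]; omega)
        rw [zrk_closure_empty] at hG0lb
        exact ⟨(M.E, G0), hmk M.E G0 hEfl hG0f hEne (zrk_nonempty hG0lb)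
          (Or.inr fun h => hep2 (hG0sub (by rw [h]; exact heE))) subset_union_left,
          fun hm => hep2 (hG0sub hm.2), hp.1.subset_ground, hG0sub,
          hnesnd _ _ (ne_of_lt hG0ub)⟩
    · obtain ⟨hep2, hlt2⟩ := himp2 hcase
      rw [psi_of_not_mem hcase] at hpsi
      by_cases hG2 : 2 ≤ zrk M✶ p.2
      · obtain ⟨G0, hG0f, -, hG0sub, heG0, hG0lb, hG0ub⟩ :=
          exists_flat_between hdfin (flat_closure' M✶ ∅) hp.2.1 (hclbotd _ hp.2.1) hep2 heclOd
            (by rw [zrk_closure_empty]; omega)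
        rw [zrk_closure_empty] at hG0lb
        exact ⟨(M.E, G0), hmk M.E G0 hEfl hG0f hEne (zrk_nonempty hG0lb)
          (Or.inr fun h => heG0 (by rw [h]; exact heE)) subset_union_left,
          fun hm => heG0 hm.2, hp.1.subset_ground, hG0sub, hnesnd _ _ (ne_of_lt hG0ub)⟩
      · have hgap : zrk M p.1 + 2 ≤ zrk M M.E := by omega
        obtain ⟨F', hF'f, hF's1, hF's2, heF', hF'lb, hF'ub⟩ :=
          exists_flat_between hE hp.1 hEfl hp.1.subset_ground heE hcase hgap
        refine ⟨(F', p.2), hmk F' p.2 hF'f hp.2.1 (hp.2.2.1.mono hF's1) hp.2.2.2.1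
          (Or.inl fun h => heF' (by rw [h]; exact heE)) ?_,
          fun hm => heF' hm.1, hF's1, Subset.rfl, hnefst _ _ (ne_of_gt hF'lb)⟩
        rw [← hp.2.2.2.2.2]; exact union_subset_union_left _ hF's1
  -- insertion
  have hinsert : ∀ p q : Set α × Set α, M.IsBiflat p → e ∉ p.1 ∩ p.2 →
      M.IsBiflat q → e ∉ q.1 ∩ q.2 → p.1 ⊆ q.1 → q.2 ⊆ p.2 →
      psi M e p + 2 ≤ psi M e q →
      ∃ x, M.IsBiflat x ∧ e ∉ x.1 ∩ x.2 ∧ p.1 ⊆ x.1 ∧ x.2 ⊆ p.2 ∧ x ≠ p ∧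
        x.1 ⊆ q.1 ∧ q.2 ⊆ x.2 ∧ x ≠ q := by
    intro p q hp hwp hq hwq h12 h21 hgap2
    have hsubp2 : p.2 ⊆ M.E := by have := hp.2.1.subset_ground; rwa [hdE] at this
    have hsubq2 : q.2 ⊆ M.E := by have := hq.2.1.subset_ground; rwa [hdE] at this
    have hFm : zrk M p.1 ≤ zrk M q.1 :=
      zrk_mono M h12 hq.1.subset_ground (hE.subset hq.1.subset_ground)
    have hGm : zrk M✶ q.2 ≤ zrk M✶ p.2 :=
      zrk_mono M✶ h21 hp.2.1.subset_ground (hdfin.subset hp.2.1.subset_ground)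
    have hunp : p.1 ∪ p.2 = M.E := hp.2.2.2.2.2
    have hunq : q.1 ∪ q.2 = M.E := hq.2.2.2.2.2
    by_cases he1 : e ∈ p.1
    · have he1' : e ∈ q.1 := h12 he1
      have hep2 : e ∉ p.2 := fun h => hwp ⟨he1, h⟩
      rw [psi_of_mem he1, psi_of_mem he1'] at hgap2
      by_cases hFF : p.1 = q.1
      · have hgapG : zrk M✶ q.2 + 2 ≤ zrk M✶ p.2 := by rw [hFF] at hgap2; omega
        have hnsub : ¬ p.2 ⊆ q.2 := fun hsub => by
          have := zrk_mono M✶ hsub hq.2.1.subset_ground (hdfin.subset hq.2.1.subset_ground)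
          omega
        obtain ⟨x0, hx01, hx02⟩ := not_subset.1 hnsub
        obtain ⟨G2, hG2f, hG2s1, hG2s2, -, hG2lb, hG2ub⟩ :=
          exists_flat_between hdfin hq.2.1 hp.2.1 h21 hx01 hx02 hgapG
        refine ⟨(q.1, G2), hmk q.1 G2 hq.1 hG2f hq.2.2.1 (hq.2.2.2.1.mono hG2s1)
          (Or.inr fun h => hep2 (hG2s2 (by rw [h]; exact heE))) ?_,
          fun hm => hep2 (hG2s2 hm.2), h12, hG2s2, hnesnd _ _ (ne_of_lt hG2ub),
          Subset.rfl, hG2s1, hnesnd _ _ (ne_of_gt hG2lb)⟩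
        rw [← hunq]; exact union_subset_union_right _ hG2s1
      · by_cases hGG : p.2 = q.2
        · have hgapF : zrk M p.1 + 2 ≤ zrk M q.1 := by rw [hGG] at hgap2; omega
          have hnsub : ¬ q.1 ⊆ p.1 := fun hsub => by
            have := zrk_mono M hsub hp.1.subset_ground (hE.subset hp.1.subset_ground)
            omega
          obtain ⟨x0, hx01, hx02⟩ := not_subset.1 hnsub
          obtain ⟨F2, hF2f, hF2s1, hF2s2, -, hF2lb, hF2ub⟩ :=
            exists_flat_between hE hp.1 hq.1 h12 hx01 hx02 hgapF
          refine ⟨(F2, p.2), hmk F2 p.2 hF2f hp.2.1 (hp.2.2.1.mono hF2s1) hp.2.2.2.1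
            (Or.inr fun h => hep2 (by rw [h]; exact heE)) ?_,
            fun hm => hep2 hm.2, hF2s1, Subset.rfl, hnefst _ _ (ne_of_gt hF2lb),
            hF2s2, h21, hnefst _ _ (ne_of_lt hF2ub)⟩
          rw [← hunp]; exact union_subset_union_left _ hF2s1
        · refine ⟨(q.1, p.2), hmk q.1 p.2 hq.1 hp.2.1 hq.2.2.1 hp.2.2.2.1
            (Or.inr fun h => hep2 (by rw [h]; exact heE)) ?_,
            fun hm => hep2 hm.2, h12, Subset.rfl, fun h => hFF (by rw [← h]),
            Subset.rfl, h21, fun h => hGG (by rw [← h])⟩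
          rw [← hunp]; exact union_subset_union_left _ h12
    · have hep2 : e ∈ p.2 := by
        have h2 : e ∈ p.1 ∪ p.2 := by rw [hunp]; exact heE
        rcases h2 with h2 | h2
        · exact absurd h2 he1
        · exact h2
      by_cases he1' : e ∈ q.1
      · have heq2 : e ∉ q.2 := fun h => hwq ⟨he1', h⟩
        rw [psi_of_not_mem he1, psi_of_mem he1'] at hgap2
        by_cases hFgap : zrk M p.1 + 2 ≤ zrk M q.1
        · obtain ⟨F2, hF2f, hF2s1, hF2s2, heF2, hF2lb, hF2ub⟩ :=
            exists_flat_between hE hp.1 hq.1 h12 he1' he1 hFgap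
          refine ⟨(F2, p.2), hmk F2 p.2 hF2f hp.2.1 (hp.2.2.1.mono hF2s1) hp.2.2.2.1
            (Or.inl fun h => heF2 (by rw [h]; exact heE)) ?_,
            fun hm => heF2 hm.1, hF2s1, Subset.rfl, hnefst _ _ (ne_of_gt hF2lb),
            hF2s2, h21, hnefst _ _ (ne_of_lt hF2ub)⟩
          rw [← hunp]; exact union_subset_union_left _ hF2s1
        · have hgapG : zrk M✶ q.2 + 2 ≤ zrk M✶ p.2 := by omega
          obtain ⟨G2, hG2f, hG2s1, hG2s2, heG2, hG2lb, hG2ub⟩ :=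
            exists_flat_between hdfin hq.2.1 hp.2.1 h21 hep2 heq2 hgapG
          refine ⟨(q.1, G2), hmk q.1 G2 hq.1 hG2f hq.2.2.1 (hq.2.2.2.1.mono hG2s1)
            (Or.inr fun h => heG2 (by rw [h]; exact heE)) ?_,
            fun hm => heG2 hm.2, h12, hG2s2, hnesnd _ _ (ne_of_lt hG2ub),
            Subset.rfl, hG2s1, hnesnd _ _ (ne_of_gt hG2lb)⟩
          rw [← hunq]; exact union_subset_union_right _ hG2s1
      · have heq2 : e ∈ q.2 := by
          have h2 : e ∈ q.1 ∪ q.2 := by rw [hunq]; exact heE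
          rcases h2 with h2 | h2
          · exact absurd h2 he1'
          · exact h2
        rw [psi_of_not_mem he1, psi_of_not_mem he1'] at hgap2
        by_cases hFF : p.1 = q.1
        · have hgapG : zrk M✶ q.2 + 2 ≤ zrk M✶ p.2 := by rw [hFF] at hgap2; omega
          have hnsub : ¬ p.2 ⊆ q.2 := fun hsub => by
            have := zrk_mono M✶ hsub hq.2.1.subset_ground (hdfin.subset hq.2.1.subset_ground)
            omega
          obtain ⟨x0, hx01, hx02⟩ := not_subset.1 hnsub
          obtain ⟨G2, hG2f, hG2s1, hG2s2, -, hG2lb, hG2ub⟩ :=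
            exists_flat_between hdfin hq.2.1 hp.2.1 h21 hx01 hx02 hgapG
          refine ⟨(q.1, G2), hmk q.1 G2 hq.1 hG2f hq.2.2.1 (hq.2.2.2.1.mono hG2s1)
            (Or.inl fun h => he1' (by rw [h]; exact heE)) ?_,
            fun hm => he1' hm.1, h12, hG2s2, hnesnd _ _ (ne_of_lt hG2ub),
            Subset.rfl, hG2s1, hnesnd _ _ (ne_of_gt hG2lb)⟩
          rw [← hunq]; exact union_subset_union_right _ hG2s1
        · by_cases hGG : p.2 = q.2
          · have hgapF : zrk M p.1 + 2 ≤ zrk M q.1 := by rw [hGG] at hgap2; omega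
            have hnsub : ¬ q.1 ⊆ p.1 := fun hsub => by
              have := zrk_mono M hsub hp.1.subset_ground (hE.subset hp.1.subset_ground)
              omega
            obtain ⟨x0, hx01, hx02⟩ := not_subset.1 hnsub
            obtain ⟨F2, hF2f, hF2s1, hF2s2, -, hF2lb, hF2ub⟩ :=
              exists_flat_between hE hp.1 hq.1 h12 hx01 hx02 hgapF
            refine ⟨(F2, p.2), hmk F2 p.2 hF2f hp.2.1 (hp.2.2.1.mono hF2s1) hp.2.2.2.1
              (Or.inl fun h => he1' (hF2s2 (by rw [h]; exact heE))) ?_,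
              fun hm => he1' (hF2s2 hm.1), hF2s1, Subset.rfl, hnefst _ _ (ne_of_gt hF2lb),
              hF2s2, h21, hnefst _ _ (ne_of_lt hF2ub)⟩
            rw [← hunp]; exact union_subset_union_left _ hF2s1
          · refine ⟨(q.1, p.2), hmk q.1 p.2 hq.1 hp.2.1 hq.2.2.1 hp.2.2.2.1
              (Or.inl fun h => he1' (by rw [h]; exact heE)) ?_,
              fun hm => he1' hm.1, h12, Subset.rfl, fun h => hFF (by rw [← h]),
              Subset.rfl, h21, fun h => hGG (by rw [← h])⟩
            rw [← hunp]; exact union_subset_union_left _ h12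
  -- finiteness and injectivity
  have hSfin : S.Finite := by
    apply Set.Finite.subset (hE.finite_subsets.prod hE.finite_subsets)
    intro p hp
    constructor
    · exact (hS.1 p hp).1.subset_ground
    · have := (hS.1 p hp).2.1.subset_ground; rwa [hdE] at this
  have hinj : Set.InjOn (psi M e) S := by
    intro p hp q hq hpq
    by_contra hne
    rcases hS.2.1 p hp q hq with ⟨u1, u2⟩ | ⟨u1, u2⟩
    · exact absurd hpq
        (ne_of_lt (hmono p q (hS.1 p hp) (hw p hp) (hS.1 q hq) (hw q hq) u1 u2 hne))
    · exact absurd hpq.symm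
        (ne_of_lt (hmono q p (hS.1 q hq) (hw q hq) (hS.1 p hp) (hw p hp) u1 u2 (Ne.symm hne)))
  have himg : psi M e '' S ⊆ ↑(Finset.Icc (1:ℤ) ((n:ℤ) - 1)) := by
    rintro y ⟨p, hp, rfl⟩
    have hr := hrange p (hS.1 p hp) (hw p hp)
    simp only [Finset.coe_Icc, Set.mem_Icc]
    omega
  have hub : S.ncard ≤ n - 1 := by
    have h1' : (psi M e '' S).ncard = S.ncard := Set.ncard_image_of_injOn hinj
    have h2' : (psi M e '' S).ncard ≤ (Finset.Icc (1:ℤ) ((n:ℤ)-1)).card := by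
      rw [← Set.ncard_coe_finset]
      exact Set.ncard_le_ncard himg (Finset.finite_toSet _)
    rw [Int.card_Icc] at h2'
    omega
  rcases eq_or_lt_of_le hub with heq | hlt
  · exact heq
  exfalso
  rcases Set.eq_empty_or_nonempty S with rfl | hSne
  · rw [Set.ncard_empty] at hlt
    by_cases ha2 : 2 ≤ zrk M M.E
    · obtain ⟨F0, hF0f, -, hF0sub, heF0, hF0lb, hF0ub⟩ :=
        exists_flat_between hE (flat_closure' M ∅) hEfl (hclbot _ hEfl) heE heclO
          (by rw [zrk_closure_empty]; omega)
      rw [zrk_closure_empty] at hF0lb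
      exact hext (F0, M.E) (hmk F0 M.E hF0f hgfd (zrk_nonempty hF0lb) hEne
        (Or.inl fun h => heF0 (by rw [h]; exact heE)) subset_union_right)
        (fun hm => heF0 hm.1) (fun s hs => absurd hs (notMem_empty s))
        (notMem_empty _)
    · have hb2 : 2 ≤ zrk M✶ M.E := by omega
      obtain ⟨G0, hG0f, -, hG0sub, heG0, hG0lb, hG0ub⟩ :=
        exists_flat_between hdfin (flat_closure' M✶ ∅) hgfd (hclbotd _ hgfd) heE heclOd
          (by rw [zrk_closure_empty]; omega)
      rw [zrk_closure_empty] at hG0lb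
      exact hext (M.E, G0) (hmk M.E G0 hEfl hG0f hEne (zrk_nonempty hG0lb)
        (Or.inr fun h => heG0 (by rw [h]; exact heE)) subset_union_left)
        (fun hm => heG0 hm.2) (fun s hs => absurd hs (notMem_empty s))
        (notMem_empty _)
  · obtain ⟨pmin, hpminS, hpmin⟩ := Set.exists_min_image S (psi M e) hSfin hSne
    obtain ⟨pmax, hpmaxS, hpmax⟩ := Set.exists_max_image S (psi M e) hSfin hSne
    have hble : ∀ s ∈ S, ∀ t ∈ S, psi M e s < psi M e t → s.1 ⊆ t.1 ∧ t.2 ⊆ s.2 := by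
      intro s hs t ht hlt'
      rcases hS.2.1 s hs t ht with h | h
      · exact h
      · rcases eq_or_ne t s with rfl | hne
        · exact absurd hlt' (lt_irrefl _)
        · exact absurd (hmono t s (hS.1 t ht) (hw t ht) (hS.1 s hs) (hw s hs) h.1 h.2 hne)
            (by omega)
    by_cases hmin2 : 2 ≤ psi M e pmin
    · obtain ⟨x, hxb, hxw, hx1, hx2, hxne⟩ :=
        hbottom pmin (hS.1 _ hpminS) (hw _ hpminS) hmin2
      have hPx : psi M e x < psi M e pmin :=
        hmono x pmin hxb hxw (hS.1 _ hpminS) (hw _ hpminS) hx1 hx2 hxne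
      have hxS : x ∉ S := fun h => by have := hpmin x h; omega
      refine hext x hxb hxw ?_ hxS
      intro s hs
      rcases eq_or_ne s pmin with rfl | hne
      · exact Or.inl ⟨hx1, hx2⟩
      · have h1' : psi M e pmin < psi M e s :=
          lt_of_le_of_ne (hpmin s hs) fun h => hne (hinj hs hpminS h.symm)
        obtain ⟨h2, h3⟩ := hble pmin hpminS s hs h1'
        exact Or.inl ⟨hx1.trans h2, h3.trans hx2⟩
    · by_cases hmax2 : psi M e pmax ≤ zrk M M.E + zrk M✶ M.E - 3
      · obtain ⟨x, hxb, hxw, hx1, hx2, hxne⟩ :=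
          htop pmax (hS.1 _ hpmaxS) (hw _ hpmaxS) hmax2
        have hPx : psi M e pmax < psi M e x :=
          hmono pmax x (hS.1 _ hpmaxS) (hw _ hpmaxS) hxb hxw hx1 hx2 (Ne.symm hxne)
        have hxS : x ∉ S := fun h => by have := hpmax x h; omega
        refine hext x hxb hxw ?_ hxS
        intro s hs
        rcases eq_or_ne s pmax with rfl | hne
        · exact Or.inr ⟨hx1, hx2⟩
        · have h1' : psi M e s < psi M e pmax :=
            lt_of_le_of_ne (hpmax s hs) fun h => hne (hinj hs hpmaxS h)
          obtain ⟨h2, h3⟩ := hble s hs pmax hpmaxS h1'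
          exact Or.inr ⟨h2.trans hx1, hx2.trans h3⟩
      · have hpmin1 : psi M e pmin = 1 := by
          have := (hrange pmin (hS.1 _ hpminS) (hw _ hpminS)).1; omega
        have hpmaxv : psi M e pmax = zrk M M.E + zrk M✶ M.E - 2 := by
          have := (hrange pmax (hS.1 _ hpmaxS) (hw _ hpmaxS)).2; omega
        have hnotsub : ¬ (↑(Finset.Icc (1:ℤ) ((n:ℤ)-1)) ⊆ psi M e '' S) := by
          intro h
          have h2' := Set.ncard_le_ncard h (hSfin.image _)
          rw [Set.ncard_coe_finset, Int.card_Icc, Set.ncard_image_of_injOn hinj] at h2'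
          omega
        obtain ⟨m, hmIcc, hmnot⟩ := not_subset.1 hnotsub
        rw [Finset.mem_coe, Finset.mem_Icc] at hmIcc
        have hm1 : m ≠ 1 := fun h => hmnot ⟨pmin, hpminS, by omega⟩
        have hm2 : m ≠ (n:ℤ) - 1 := fun h => hmnot ⟨pmax, hpmaxS, by omega⟩
        have hAmne : pmin ∈ {s ∈ S | psi M e s < m} := ⟨hpminS, by omega⟩
        have hApne : pmax ∈ {s ∈ S | m < psi M e s} := ⟨hpmaxS, by omega⟩
        obtain ⟨p, hpA, hpmaxA⟩ := Set.exists_max_image {s ∈ S | psi M e s < m} (psi M e)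
          (hSfin.subset (sep_subset _ _)) ⟨pmin, hAmne⟩
        obtain ⟨q, hqA, hqminA⟩ := Set.exists_min_image {s ∈ S | m < psi M e s} (psi M e)
          (hSfin.subset (sep_subset _ _)) ⟨pmax, hApne⟩
        obtain ⟨hpS, hpm⟩ := hpA
        obtain ⟨hqS, hqm⟩ := hqA
        have hblepq : p.1 ⊆ q.1 ∧ q.2 ⊆ p.2 := hble p hpS q hqS (by omega)
        obtain ⟨x, hxb, hxw, hx1, hx2, hxnep, hx3, hx4, hxneq⟩ :=
          hinsert p q (hS.1 _ hpS) (hw _ hpS) (hS.1 _ hqS) (hw _ hqS)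
            hblepq.1 hblepq.2 (by omega)
        have hPpx : psi M e p < psi M e x :=
          hmono p x (hS.1 _ hpS) (hw _ hpS) hxb hxw hx1 hx2 (Ne.symm hxnep)
        have hPxq : psi M e x < psi M e q :=
          hmono x q hxb hxw (hS.1 _ hqS) (hw _ hqS) hx3 hx4 hxneq
        have hxS : x ∉ S := by
          intro h
          rcases lt_trichotomy (psi M e x) m with h' | h' | h'
          · have := hpmaxA x ⟨h, h'⟩; omega
          · exact hmnot ⟨x, h, h'⟩
          · have := hqminA x ⟨h, h'⟩; omega
        refine hext x hxb hxw ?_ hxS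
        intro s hs
        rcases lt_trichotomy (psi M e s) m with h' | h' | h'
        · have hsp : psi M e s ≤ psi M e p := hpmaxA s ⟨hs, h'⟩
          rcases eq_or_lt_of_le hsp with heq2 | hlt2
          · have hse : s = p := hinj hs hpS heq2
            rw [hse]
            exact Or.inr ⟨hx1, hx2⟩
          · obtain ⟨h2, h3⟩ := hble s hs p hpS hlt2
            exact Or.inr ⟨h2.trans hx1, hx2.trans h3⟩
        · exact absurd ⟨s, hs, h'⟩ hmnot
        · have hqs : psi M e q ≤ psi M e s := hqminA s ⟨hs, h'⟩
          rcases eq_or_lt_of_le hqs with heq2 | hlt2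
          · have hse : q = s := hinj hqS hs heq2
            rw [← hse]
            exact Or.inl ⟨hx3, hx4⟩
          · obtain ⟨h2, h3⟩ := hble q hqS s hs hlt2
            exact Or.inl ⟨hx3.trans h2, h3.trans hx4⟩

end Matroid
end

section
/- Let F = (∅ ⊊ F₁ ⊆ ⋯ ⊆ F_k ⊆ E) be an increasing sequence of nonempty flats of M, and G = (E ⊇ G₁ ⊇ ⋯ ⊇ G_k ⊋ ∅) a decreasing sequence of nonempty flats of M*. Then the collection of pairs F₁|G₁, …, F_k|G_k is a biflag of M if and only if F_j ∪ G_j = E for all 1 ≤ j ≤ k and F_j ∪ G_{j+1} ≠ E for some 0 ≤ j ≤ k (with the conventions F₀ = ∅ and G_{k+1} = ∅). -/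
open Set

variable {α : Type*}

namespace Matroid

/-- A chain of pairs of flats forms a biflag iff `F_j ∪ G_j = E` for all `1 ≤ j ≤ k` and
`F_j ∪ G_{j+1} ≠ E` for some `0 ≤ j ≤ k`, with conventions `F₀ = ∅` and `G_{k+1} = ∅`. -/
theorem stmt2 (M : Matroid α) (h0 : M.NoLoops) (h1 : M.NoColoops)
    (k : ℕ) (F G : ℕ → Set α)
    (hF0 : F 0 = ∅) (hGtopk : G (k+1) = ∅)
    (hFflat : ∀ j, 1 ≤ j → j ≤ k → M.IsFlat (F j) ∧ (F j).Nonempty)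
    (hGflat : ∀ j, 1 ≤ j → j ≤ k → M✶.IsFlat (G j) ∧ (G j).Nonempty)
    (hFmono : ∀ j, 1 ≤ j → j < k → F j ⊆ F (j+1))
    (hGmono : ∀ j, 1 ≤ j → j < k → G (j+1) ⊆ G j) :
    M.IsBiflag ((fun j => (F j, G j)) '' Set.Icc 1 k) ↔
      ((∀ j, 1 ≤ j → j ≤ k → F j ∪ G j = M.E) ∧ ∃ j ≤ k, F j ∪ G (j+1) ≠ M.E) := by
  classical
  have hFE : ∀ j, 1 ≤ j → j ≤ k → F j ⊆ M.E := fun j a b => (hFflat j a b).1.subset_ground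
  have hGE : ∀ j, 1 ≤ j → j ≤ k → G j ⊆ M.E := fun j a b => by
    have := (hGflat j a b).1.subset_ground
    rwa [Matroid.dual_ground] at this
  -- F chain: F i ⊆ F j for 1 ≤ i ≤ j ≤ k (also works for i = 0 since F 0 = ∅)
  have hFchain : ∀ j i, i ≤ j → j ≤ k → F i ⊆ F j := by
    intro j
    induction j with
    | zero =>
      intro i h2 h3
      have : i = 0 := Nat.le_zero.mp h2
      rw [this]
    | succ n ih =>
      intro i h2 h3
      rcases Nat.lt_or_ge n i with h | h
      · have : i = n + 1 := by omega
        rw [this]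
      · refine (ih i h (Nat.le_of_succ_le h3)).trans ?_
        rcases Nat.eq_zero_or_pos n with hn | hn
        · rw [hn, hF0]; exact Set.empty_subset _
        · exact hFmono n hn (by omega)
  -- G chain: G j ⊆ G i for 1 ≤ i ≤ j ≤ k+1 (works at j = k+1 since G (k+1) = ∅)
  have hGchain : ∀ j i, 1 ≤ i → i ≤ j → j ≤ k → G j ⊆ G i := by
    intro j
    induction j with
    | zero => intro i h1 h2 h3; omega
    | succ n ih =>
      intro i h1 h2 h3
      rcases Nat.lt_or_ge n i with h | h
      · have : i = n + 1 := by omega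
        rw [this]
      · exact (hGmono n (h1.trans h) (by omega)).trans (ih i h1 h (by omega))
  have hGsub : ∀ j ≤ k, G (j+1) ⊆ M.E := by
    intro j hj
    rcases eq_or_lt_of_le hj with h | h
    · rw [h, hGtopk]; exact Set.empty_subset _
    · exact hGE (j+1) (by omega) h
  have hFsub : ∀ j ≤ k, F j ⊆ M.E := by
    intro j hj
    rcases Nat.eq_zero_or_pos j with h | h
    · rw [h, hF0]; exact Set.empty_subset _
    · exact hFE j h hj
  constructor
  · rintro ⟨hbf, hcomp, hU⟩
    have hmem : ∀ j, 1 ≤ j → j ≤ k → ((F j, G j) : Set α × Set α) ∈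
        ((fun j => (F j, G j)) '' Set.Icc 1 k) := fun j a b => ⟨j, ⟨a, b⟩, rfl⟩
    refine ⟨fun j a b => (hbf _ (hmem j a b)).2.2.2.2.2, ?_⟩
    -- find x ∈ E outside the union
    have hsub : (⋃ p ∈ ((fun j => (F j, G j)) '' Set.Icc 1 k), p.1 ∩ p.2) ⊆ M.E := by
      rintro x hx
      simp only [Set.mem_iUnion] at hx
      obtain ⟨p, ⟨j, ⟨hj1, hj2⟩, rfl⟩, hxp⟩ := hx
      exact hFE j hj1 hj2 hxp.1
    obtain ⟨x, hxE, hxU⟩ : ∃ x ∈ M.E,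
        x ∉ (⋃ p ∈ ((fun j => (F j, G j)) '' Set.Icc 1 k), p.1 ∩ p.2) := by
      by_contra h
      push_neg at h
      exact hU (Set.Subset.antisymm hsub h)
    set P : ℕ → Prop := fun j => x ∉ F j with hP
    set j₀ := Nat.findGreatest P k with hj₀
    have hj₀k : j₀ ≤ k := Nat.findGreatest_le k
    have hPj₀ : x ∉ F j₀ :=
      Nat.findGreatest_spec (Nat.zero_le k) (show P 0 by rw [hP]; simp [hF0])
    have hxG : x ∉ G (j₀ + 1) := by
      rcases eq_or_lt_of_le hj₀k with h | h
      · rw [h, hGtopk]; exact Set.notMem_empty x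
      · have hxF : x ∈ F (j₀ + 1) := by
          by_contra hc
          exact (Nat.findGreatest_is_greatest (Nat.lt_succ_self _) h) hc
        intro hxG'
        exact hxU (Set.mem_iUnion.mpr ⟨(F (j₀+1), G (j₀+1)),
          Set.mem_iUnion.mpr ⟨hmem (j₀+1) (by omega) h, ⟨hxF, hxG'⟩⟩⟩)
    refine ⟨j₀, hj₀k, fun hEq => ?_⟩
    rw [← hEq] at hxE
    rcases hxE with h | h
    · exact hPj₀ h
    · exact hxG h
  · rintro ⟨hall, j₀, hj₀k, hne⟩
    obtain ⟨x, hxE, hxFG⟩ : ∃ x ∈ M.E, x ∉ F j₀ ∪ G (j₀+1) := by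
      by_contra h
      push_neg at h
      exact hne (Set.Subset.antisymm (Set.union_subset (hFsub j₀ hj₀k) (hGsub j₀ hj₀k)) h)
    have hxF : x ∉ F j₀ := fun h => hxFG (Or.inl h)
    have hxG : x ∉ G (j₀+1) := fun h => hxFG (Or.inr h)
    refine ⟨?_, ?_, ?_⟩
    · rintro p ⟨j, ⟨hj1, hj2⟩, rfl⟩
      refine ⟨(hFflat j hj1 hj2).1, (hGflat j hj1 hj2).1, (hFflat j hj1 hj2).2,
        (hGflat j hj1 hj2).2, ?_, hall j hj1 hj2⟩
      rintro ⟨hFe, hGe⟩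
      simp only at hFe hGe
      rcases le_or_gt j j₀ with h | h
      · exact hxF (hFchain j₀ j h hj₀k (hFe ▸ hxE))
      · exact hxG (hGchain j (j₀+1) (by omega) h hj2 (hGe ▸ hxE))
    · rintro p ⟨i, ⟨hi1, hi2⟩, rfl⟩ q ⟨j, ⟨hj1, hj2⟩, rfl⟩
      rcases le_or_gt i j with h | h
      · exact Or.inl ⟨hFchain j i h hj2, hGchain j i hi1 h hj2⟩
      · exact Or.inr ⟨hFchain i j h.le hi2, hGchain i j hj1 h.le hi2⟩
    · intro hU
      have hx : x ∈ (⋃ p ∈ ((fun j => (F j, G j)) '' Set.Icc 1 k), p.1 ∩ p.2) :=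
        hU ▸ hxE
      simp only [Set.mem_iUnion] at hx
      obtain ⟨p, ⟨j, ⟨hj1, hj2⟩, rfl⟩, hxp⟩ := hx
      rcases le_or_gt j j₀ with h | h
      · exact hxF (hFchain j₀ j h hj₀k hxp.1)
      · exact hxG (hGchain j (j₀+1) (by omega) h hj2 hxp.2)

end Matroid
end

section
/- Let M be a matroid on a linearly ordered ground set and B a basis. Then i ∉ B is externally active for B if and only if B is the lexicographically largest basis contained in B ∪ {i}; and i ∈ B is internally active for B if and only if B is the lexicographically smallest basis containing B − {i}. -/
open Set

variable {α : Type*}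

namespace Matroid

/-! Auxiliary lemmas -/

lemma fundC_circuit {M : Matroid α} {B : Set α} (hB : M.IsBase B) {i : α} (hi : i ∈ M.E \ B) :
    M.Circuit' (insert i {e ∈ B | i ∉ M.closure (B \ {e})}) := by
  set J := {e ∈ B | i ∉ M.closure (B \ {e})} with hJdef
  have hJB : J ⊆ B := sep_subset _ _
  have hiJ : i ∉ J := fun h => hi.2 (hJB h)
  have hJind : M.Indep J := hB.indep.subset hJB
  refine ⟨insert_subset hi.1 (hJB.trans hB.subset_ground), ?_, ?_⟩
  · intro hInd
    rw [hJind.insert_indep_iff_of_notMem hiJ] at hInd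
    refine hInd.2 ?_
    by_cases hK : (B \ J).Nonempty
    · have hcl : M.closure (⋂ e ∈ B \ J, B \ {e}) = ⋂ e ∈ B \ J, M.closure (B \ {e}) := by
        refine closure_biInter_eq_biInter_closure_of_biUnion_indep hK ?_
        exact hB.indep.subset (by simp [iUnion_subset_iff])
      have hJe : (⋂ e ∈ B \ J, B \ {e}) = J := by
        ext x
        simp only [mem_iInter, mem_diff, mem_singleton_iff]
        constructor
        · intro h
          have hxB : x ∈ B := (h _ hK.some_mem).1
          by_contra hxJ
          exact (h x ⟨hxB, hxJ⟩).2 rfl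
        · intro hx e he
          exact ⟨hJB hx, fun h => he.2 (h ▸ hx)⟩
      rw [hJe] at hcl
      rw [hcl, mem_iInter₂]
      intro e he
      by_contra hicl
      exact he.2 ⟨he.1, hicl⟩
    · rw [not_nonempty_iff_eq_empty, diff_eq_empty] at hK
      have : J = B := hJB.antisymm hK
      rw [this, hB.closure_eq]
      exact hi.1
  · intro D hD
    obtain ⟨x, hxC, hxD⟩ := exists_of_ssubset hD
    have hDsub : D ⊆ insert i J \ {x} := subset_diff_singleton hD.subset hxD
    rcases hxC with rfl | hxJ
    · refine hB.indep.subset (hDsub.trans ?_)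
      intro y hy
      rcases hy.1 with rfl | hyJ
      · exact absurd rfl hy.2
      · exact hJB hyJ
    · have hx : M.Indep (insert i (B \ {x})) := by
        rw [(hB.indep.subset diff_subset).insert_indep_iff_of_notMem (fun h => hi.2 h.1)]
        exact ⟨hi.1, hxJ.2⟩
      refine hx.subset (hDsub.trans ?_)
      intro y hy
      rcases hy.1 with rfl | hyJ
      · exact mem_insert _ _
      · exact Or.inr ⟨hJB hyJ, fun h => hy.2 h⟩

lemma base_subset_insert {M : Matroid α} {B B' : Set α} (hB : M.IsBase B) (hB' : M.IsBase B') {i : α}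
    (hi : i ∉ B) (hsub : B' ⊆ insert i B) (hne : B' ≠ B) :
    ∃ e ∈ B, e ∉ B' ∧ B' = insert i (B \ {e}) := by
  have hd : B' \ B ⊆ {i} := by
    intro x hx
    rcases hsub hx.1 with rfl | h
    · rfl
    · exact absurd h hx.2
  have hiB' : i ∈ B' := by
    by_contra hiB'
    refine hne (hB'.eq_of_subset_indep hB.indep ?_)
    intro x hx
    rcases hsub hx with rfl | h
    · exact absurd hx hiB'
    · exact h
  have hd' : B' \ B = {i} := hd.antisymm (by simpa using ⟨hiB', hi⟩)
  have hcard := hB'.encard_diff_comm hB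
  rw [hd', encard_singleton, eq_comm, encard_eq_one] at hcard
  obtain ⟨e, he⟩ := hcard
  have heB : e ∈ B := (he ▸ rfl : e ∈ B \ B').1
  have heB' : e ∉ B' := (he ▸ rfl : e ∈ B \ B').2
  refine ⟨e, heB, heB', ?_⟩
  ext x
  constructor
  · intro hx
    rcases hsub hx with rfl | hxB
    · exact mem_insert _ _
    · exact Or.inr ⟨hxB, fun h => heB' (h ▸ hx)⟩
  · rintro (rfl | ⟨hxB, hxe⟩)
    · exact hiB'
    · by_contra hxB'
      exact hxe (he ▸ (⟨hxB, hxB'⟩ : x ∈ B \ B') : x ∈ ({e} : Set α))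

lemma ext_key [LinearOrder α] {M : Matroid α} {B : Set α} (hB : M.IsBase B) {i : α}
    (hi : i ∈ M.E \ B) :
    (∃ C, M.Circuit' C ∧ C ⊆ insert i B ∧ IsLeast C i) ↔
      ∀ B', M.IsBase B' → B' ⊆ insert i B → LexLE B' B := by
  constructor
  · rintro ⟨C, hC, hCsub, hCl⟩ B' hB' hsub
    by_cases hne : B' = B
    · exact Or.inl hne
    obtain ⟨e, heB, heB', hEq⟩ := base_subset_insert hB hB' hi.2 hsub hne
    have heC : e ∈ C := by
      by_contra heC
      refine hC.2.1 (hB'.indep.subset ?_)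
      intro x hx
      rcases hCsub hx with rfl | hxB
      · exact hEq ▸ mem_insert _ _
      · exact hEq ▸ Or.inr ⟨hxB, fun h => heC (h ▸ hx)⟩
    have hie : i ≠ e := fun h => hi.2 (h ▸ heB)
    refine Or.inr ⟨i, ⟨Or.inl ⟨hEq ▸ mem_insert _ _, hi.2⟩, ?_⟩, hEq ▸ mem_insert _ _⟩
    rintro x (⟨hx1, hx2⟩ | ⟨hx1, hx2⟩)
    · rcases hEq ▸ hx1 with rfl | h
      · exact le_refl _
      · exact absurd h.1 hx2
    · have hxe : x = e := by
        by_contra hxe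
        exact hx2 (hEq ▸ Or.inr ⟨hx1, hxe⟩)
      exact hxe ▸ hCl.2 heC
  · intro h
    refine ⟨_, fundC_circuit hB hi, insert_subset_insert (sep_subset _ _), mem_insert _ _, ?_⟩
    rintro x (rfl | hxJ)
    · exact le_refl _
    have hxB : x ∈ B := hxJ.1
    have hind : M.Indep (insert i (B \ {x})) := by
      rw [(hB.indep.subset diff_subset).insert_indep_iff_of_notMem (fun hh => hi.2 hh.1)]
      exact ⟨hi.1, hxJ.2⟩
    have hbase : M.IsBase (insert i (B \ {x})) := hB.exchange_isBase_of_indep hi.2 hind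
    have hlex := h _ hbase (insert_subset_insert diff_subset)
    have hxnB' : x ∉ insert i (B \ {x}) := by
      rintro (rfl | hh)
      · exact hi.2 hxB
      · exact hh.2 rfl
    rcases hlex with heq | ⟨e₀, hle, he₀⟩
    · exact absurd (heq ▸ mem_insert _ _) hi.2
    · have he₀i : e₀ = i := by
        rcases hle.1 with ⟨h1, h2⟩ | ⟨h1, h2⟩
        · rcases h1 with rfl | hh
          · rfl
          · exact absurd hh.1 h2
        · exact absurd he₀ h2
      exact he₀i ▸ hle.2 (Or.inr ⟨hxB, hxnB'⟩)

lemma lexLE_compl [LinearOrder α] {E A C : Set α} (hA : A ⊆ E) (hC : C ⊆ E) :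
    LexLE A C ↔ LexLE (E \ C) (E \ A) := by
  have h1 : (E \ C) \ (E \ A) = A \ C := by
    ext x
    constructor
    · rintro ⟨⟨hxE, hxC⟩, hx⟩
      exact ⟨by_contra fun hxA => hx ⟨hxE, hxA⟩, hxC⟩
    · rintro ⟨hxA, hxC⟩
      exact ⟨⟨hA hxA, hxC⟩, fun hh => hh.2 hxA⟩
  have h2 : (E \ A) \ (E \ C) = C \ A := by
    ext x
    constructor
    · rintro ⟨⟨hxE, hxA⟩, hx⟩
      exact ⟨by_contra fun hxC => hx ⟨hxE, hxC⟩, hxA⟩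
    · rintro ⟨hxC, hxA⟩
      exact ⟨⟨hC hxC, hxA⟩, fun hh => hh.2 hxC⟩
  constructor
  · rintro (rfl | ⟨e, hle, heA⟩)
    · exact Or.inl rfl
    · have heAC : e ∈ A \ C := by
        rcases hle.1 with hh | hh
        · exact hh
        · exact absurd heA hh.2
      exact Or.inr ⟨e, by rwa [h1, h2], ⟨hA heA, heAC.2⟩⟩
  · rintro (heq | ⟨e, hle, heEC⟩)
    · exact Or.inl (by rw [← diff_diff_cancel_left hA, ← diff_diff_cancel_left hC, heq])
    · rw [h1, h2] at hle
      have heAC : e ∈ A \ C := by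
        rcases hle.1 with hh | hh
        · exact hh
        · exact absurd hh.1 heEC.2
      exact Or.inr ⟨e, hle, heAC.1⟩

/-- `i ∉ B` is externally active iff `B` is the lexicographically largest basis contained in
`B ∪ {i}`, and `i ∈ B` is internally active iff `B` is the lexicographically smallest basis
containing `B − {i}`. -/
theorem stmt5 [LinearOrder α] (M : Matroid α) (B : Set α) (hB : M.IsBase B) :
    (∀ i ∈ M.E \ B, (M.ExtActive B i ↔ ∀ B', M.IsBase B' → B' ⊆ insert i B → LexLE B' B)) ∧
    (∀ i ∈ B, (M.IntActive B i ↔ ∀ B', M.IsBase B' → B \ {i} ⊆ B' → LexLE B B')) := by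
  constructor
  · intro i hi
    rw [ExtActive, and_iff_right hi]
    exact ext_key hB hi
  · intro i hiB
    have hiE : i ∈ M.E := hB.subset_ground hiB
    have hi' : i ∈ M✶.E \ (M.E \ B) := ⟨hiE, fun h => h.2 hiB⟩
    have hkey := ext_key hB.compl_isBase_dual hi'
    rw [IntActive, and_iff_right hiB, hkey]
    constructor
    · intro h B' hB' hsub
      have hc : M.E \ B' ⊆ insert i (M.E \ B) := by
        intro x hx
        by_cases hxB : x ∈ B
        · have hxi : x = i := by
            by_contra hxi
            exact hx.2 (hsub ⟨hxB, hxi⟩)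
          exact hxi ▸ mem_insert _ _
        · exact Or.inr ⟨hx.1, hxB⟩
      have hlex := h _ hB'.compl_isBase_dual hc
      exact (lexLE_compl hB.subset_ground hB'.subset_ground).2 hlex
    · intro h B'' hB'' hsub
      have hB''E : B'' ⊆ M.E := dual_ground ▸ hB''.subset_ground
      have hM : M.IsBase (M.E \ B'') := hB''.compl_isBase_of_dual
      have hc : B \ {i} ⊆ M.E \ B'' := by
        intro x hx
        refine ⟨hB.subset_ground hx.1, fun hxB'' => ?_⟩
        rcases hsub hxB'' with rfl | hh
        · exact hx.2 rfl
        · exact hh.2 hx.1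
      have hlex := h _ hM hc
      rw [lexLE_compl hB''E (diff_subset : M.E \ B ⊆ M.E),
        diff_diff_cancel_left hB.subset_ground]
      exact hlex


end Matroid
end

section
/- A basis B of a matroid M on a linearly ordered ground set has empty externally active set if and only if B contains no broken circuit of M. -/
open Set

variable {α : Type*}

namespace Matroid

/-- A basis has empty externally active set iff it contains no broken circuit. -/
theorem stmt6 [LinearOrder α] (M : Matroid α) (B : Set α) (hB : M.IsBase B) :
    (∀ i, ¬ M.ExtActive B i) ↔
      ∀ C e, M.Circuit' C → IsLeast C e → ¬ (C \ {e} ⊆ B) := by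
  constructor
  · intro h C e hC he hsub
    by_cases heB : e ∈ B
    · have hCB : C ⊆ B := fun x hx => by
        by_cases hxe : x = e
        · exact hxe ▸ heB
        · exact hsub ⟨hx, hxe⟩
      exact hC.2.1 (hB.indep.subset hCB)
    · exact h e ⟨⟨hC.1 he.1, heB⟩, C, hC, fun x hx => by
        by_cases hxe : x = e
        · exact hxe ▸ mem_insert e B
        · exact mem_insert_of_mem e (hsub ⟨hx, hxe⟩), he⟩
  · rintro h i ⟨⟨_, hiB⟩, C, hC, hsub, hle⟩
    exact h C i hC hle (fun x ⟨hx, hxi⟩ => (hsub hx).resolve_left hxi)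

end Matroid
end

section
/- Let M be a loopless, coloopless matroid on linearly ordered ground set E of rank r+1, and let B be an nbc basis of M (a basis containing no broken circuit) with internally active set IA(B) of size k+1. Write B − IA(B) = {e₁ > ⋯ > e_{r−k}} and (E−B) − min(E−B) = {e_{r−k+1} < ⋯ < e_{n−k−1}}. Then cl(B − IA(B)) ∪ cl*((E−B) − min(E−B)) ≠ E, where cl and cl* are the closure operators of M and M* respectively. -/
open Set

variable {α : Type*}

namespace Matroid

lemma exists_circuit'_subset_aux (M : Matroid α) :
    ∀ m (D : Set α), D.Finite → D.ncard ≤ m → D ⊆ M.E → ¬ M.Indep D →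
      ∃ C ⊆ D, M.Circuit' C := by
  intro m
  induction m with
  | zero =>
    intro D hfin hle _ hdep
    rw [Nat.le_zero, Set.ncard_eq_zero hfin] at hle
    exact absurd (hle ▸ M.empty_indep) hdep
  | succ m ih =>
    intro D hfin hle hDE hdep
    by_cases h : ∀ D', D' ⊂ D → M.Indep D'
    · exact ⟨D, Subset.rfl, hDE, hdep, h⟩
    · push_neg at h
      obtain ⟨D', hss, hdep'⟩ := h
      obtain ⟨C, hCD', hC⟩ := ih D' (hfin.subset hss.subset)
        (by have := Set.ncard_lt_ncard hss hfin; omega)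
        (hss.subset.trans hDE) hdep'
      exact ⟨C, hCD'.trans hss.subset, hC⟩

lemma exists_circuit'_subset (M : Matroid α) {D : Set α} (hfin : D.Finite)
    (hDE : D ⊆ M.E) (hdep : ¬ M.Indep D) : ∃ C ⊆ D, M.Circuit' C :=
  M.exists_circuit'_subset_aux D.ncard D hfin le_rfl hDE hdep

/-- For an nbc basis `B` with `|IA(B)| = k+1`,
`cl(B − IA(B)) ∪ cl*((E−B) − min(E−B)) ≠ E`. -/
theorem stmt7 [LinearOrder α] (M : Matroid α) (n r k : ℕ) (hE : M.E.Finite)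
    (hcard : M.E.ncard = n + 1) (hrank : ∃ B₀, M.IsBase B₀ ∧ B₀.ncard = r + 1)
    (h0 : M.NoLoops) (h1 : M.NoColoops)
    (B : Set α) (hB : M.IsBase B) (hnbc : ∀ i, ¬ M.ExtActive B i)
    (hIA : {i | M.IntActive B i}.ncard = k + 1)
    (x : α) (hx : IsLeast (M.E \ B) x) :
    M.closure (B \ {i | M.IntActive B i}) ∪ M✶.closure ((M.E \ B) \ {x}) ≠ M.E := by
  have hxE : x ∈ M.E := hx.1.1
  have hxB : x ∉ B := hx.1.2
  intro hcontra
  have hdualbase : M✶.IsBase (M.E \ B) := hB.compl_isBase_dual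
  have hx2 : x ∉ M✶.closure ((M.E \ B) \ {x}) :=
    hdualbase.indep.notMem_closure_diff_of_mem hx.1
  have hx1 : x ∉ M.closure (B \ {i | M.IntActive B i}) := by
    intro hxcl
    set S := B \ {i | M.IntActive B i} with hS
    have hSindep : M.Indep S := hB.indep.subset diff_subset
    have hxS : x ∉ S := fun h => hxB h.1
    have hdep : M.Dep (insert x S) := hSindep.insert_dep_iff.2 ⟨hxcl, hxS⟩
    obtain ⟨C, hCsub, hC⟩ := M.exists_circuit'_subset
      (hE.subset hdep.subset_ground) hdep.subset_ground hdep.not_indep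
    have hxC : x ∈ C := by
      by_contra hxC
      exact hC.2.1 (hSindep.subset fun c hc =>
        ((mem_insert_iff.1 (hCsub hc)).resolve_left fun h => hxC (h ▸ hc)))
    have hnleast : ¬ IsLeast C x := fun hl =>
      hnbc x ⟨hx.1, C, hC, hCsub.trans (insert_subset_insert diff_subset), hl⟩
    have hex : ∃ b ∈ C, b < x := by
      by_contra h
      push_neg at h
      exact hnleast ⟨hxC, fun c hc => h c hc⟩
    obtain ⟨b, hbC, hbx⟩ := hex
    have hbS : b ∈ S := (mem_insert_iff.1 (hCsub hbC)).resolve_left hbx.ne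
    have hbB : b ∈ B := hbS.1
    have hbE : b ∈ M.E := hB.subset_ground hbB
    have hdep2 : M✶.Dep (insert b (M.E \ B)) :=
      hdualbase.insert_dep ⟨hbE, fun h => h.2 hbB⟩
    obtain ⟨C2, hC2sub, hC2⟩ := M✶.exists_circuit'_subset
      (hE.subset (by simpa using hdep2.subset_ground))
      hdep2.subset_ground hdep2.not_indep
    have hbC2 : b ∈ C2 := by
      by_contra h
      exact hC2.2.1 (hdualbase.indep.subset fun c hc =>
        ((mem_insert_iff.1 (hC2sub hc)).resolve_left fun he => h (he ▸ hc)))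
    have hleast : IsLeast C2 b := ⟨hbC2, fun c hc => by
      rcases mem_insert_iff.1 (hC2sub hc) with rfl | hc'
      · exact le_rfl
      · exact le_of_lt (lt_of_lt_of_le hbx (hx.2 hc'))⟩
    exact hbS.2 ⟨hbB, C2, hC2, hC2sub, hleast⟩
  rcases hcontra ▸ hxE with h | h
  · exact hx1 h
  · exact hx2 h

end Matroid
end

section
/- Let S be an independent set of a matroid M on a linearly ordered ground set, P(S) the lexicographically smallest set such that B := S ∪ P(S) is a basis. Then IA(B) = IA(S) ∪ P(S), where IA(S) = {e ∈ S : there exists a cocircuit C* ⊆ (E−S) ∪ {e} with e = min C*} and IA(B) is the internally active set of the basis B. -/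
open Set

variable {α : Type*}

namespace Matroid

/-- The complement of a cocircuit is closed: no element of a cocircuit `C` lies in the
closure of `M.E \ C`. -/
lemma aux_cocirc_flat (M : Matroid α) {C : Set α} (hC : M✶.Circuit' C) {x : α}
    (hx : x ∈ C) : x ∉ M.closure (M.E \ C) := by
  intro hxcl
  have hCE : C ⊆ M.E := hC.1
  have h1 : M✶.Indep (C \ {x}) := hC.2.2 _ (sdiff_singleton_ssubset.mpr hx)
  obtain ⟨-, B₀, hB₀, hdisj⟩ := dual_indep_iff_exists'.mp h1
  have hB₀sub : B₀ ⊆ insert x (M.E \ C) := by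
    intro b hb
    by_cases hbC : b ∈ C
    · rcases eq_or_ne b x with rfl | hbx
      · exact mem_insert _ _
      · exact absurd (⟨hbC, hbx⟩ : b ∈ C \ {x}) (disjoint_right.mp hdisj hb)
    · exact mem_insert_of_mem _ ⟨hB₀.subset_ground hb, hbC⟩
  have hsp : M.closure (insert x (M.E \ C)) = M.E := by
    have h0 := M.closure_subset_closure hB₀sub
    rw [hB₀.closure_eq] at h0
    exact (M.closure_subset_ground _).antisymm h0
  have hsp2 : M.closure (M.E \ C) = M.E := by
    have h2 : insert x (M.E \ C) ⊆ M.closure (M.E \ C) :=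
      insert_subset hxcl (M.subset_closure _ diff_subset)
    have h3 := M.closure_subset_closure_of_subset_closure h2
    rw [hsp] at h3
    exact (M.closure_subset_ground _).antisymm h3
  have hspan : M.Spanning (M.E \ C) := ⟨hsp2, diff_subset⟩
  obtain ⟨B₁, hB₁, hB₁sub⟩ := hspan.exists_isBase_subset
  exact hC.2.1 (dual_indep_iff_exists'.mpr ⟨hCE, B₁, hB₁,
    disjoint_left.mpr fun a haC haB₁ ↦ (hB₁sub haB₁).2 haC⟩)

/-- The fundamental cocircuit of `e` with respect to a base `B`. -/
lemma aux_fund_cocirc {M : Matroid α} {B : Set α} (hB : M.IsBase B) {e : α} (he : e ∈ B) :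
    M✶.Circuit' (M.E \ M.closure (B \ {e})) := by
  set K := M.E \ M.closure (B \ {e}) with hK
  have hBdiff : B \ {e} ⊆ M.closure (B \ {e}) :=
    M.subset_closure _ (diff_subset.trans hB.subset_ground)
  have heK : e ∈ K :=
    ⟨hB.subset_ground he, (indep_iff_forall_notMem_closure_diff hB.subset_ground).mp hB.indep he⟩
  refine ⟨diff_subset, ?_, ?_⟩
  · intro hKi
    obtain ⟨-, B₀, hB₀, hdisj⟩ := dual_indep_iff_exists'.mp hKi
    have hB₀sub : B₀ ⊆ M.closure (B \ {e}) := fun b hb ↦ by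
      by_contra hbc
      exact disjoint_left.mp hdisj ⟨hB₀.subset_ground hb, hbc⟩ hb
    have h3 := M.closure_subset_closure_of_subset_closure hB₀sub
    rw [hB₀.closure_eq] at h3
    exact heK.2 (h3 heK.1)
  · intro D hD
    obtain ⟨x, hxK, hxD⟩ := exists_of_ssubset hD
    have hDsub : D ⊆ K := hD.subset
    rcases eq_or_ne x e with rfl | hxe
    · refine dual_indep_iff_exists'.mpr ⟨hDsub.trans diff_subset, B, hB, ?_⟩
      refine disjoint_left.mpr fun a haD haB ↦ ?_
      rcases eq_or_ne a x with rfl | hax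
      · exact hxD haD
      · exact (hDsub haD).2 (hBdiff ⟨haB, hax⟩)
    · have hxB : x ∉ B := fun hxB ↦ hxK.2 (hBdiff ⟨hxB, hxe⟩)
      have hind : M.Indep (insert x (B \ {e})) := by
        rw [(hB.indep.diff {e}).insert_indep_iff_of_notMem (fun h ↦ hxB h.1)]
        exact hxK
      have hBx : M.IsBase (insert x (B \ {e})) := hB.exchange_isBase_of_indep hxB hind
      refine dual_indep_iff_exists'.mpr ⟨hDsub.trans diff_subset, _, hBx, ?_⟩
      refine disjoint_left.mpr fun a haD haB ↦ ?_
      rcases haB with rfl | haB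
      · exact hxD haD
      · exact (hDsub haD).2 (hBdiff haB)

/-- Elements outside the lex-min base are spanned by earlier elements. -/
lemma aux_lexmin_spans [LinearOrder α] (M : Matroid α) (S P : Set α)
    (hPsub : P ⊆ M.E \ S) (hbase : M.IsBase (S ∪ P))
    (hlex : ∀ P', P' ⊆ M.E \ S → M.IsBase (S ∪ P') → LexLE P P')
    {q : α} (hq : q ∈ M.E) (hqB : q ∉ S ∪ P) :
    q ∈ M.closure (S ∪ {x ∈ P | x < q}) := by
  by_contra hq'
  set T : Set α := S ∪ {x ∈ P | x < q} with hT
  have hTsub : T ⊆ S ∪ P := union_subset_union_right _ (fun x hx ↦ hx.1)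
  have hTind : M.Indep T := hbase.indep.subset hTsub
  have hqT : q ∉ T := fun h ↦ hqB (hTsub h)
  have hI₀ : M.Indep (insert q T) := by
    rw [hTind.insert_indep_iff_of_notMem hqT]; exact ⟨hq, hq'⟩
  obtain ⟨B₂, hB₂, hI₀B₂, hB₂sub⟩ := hI₀.exists_isBase_subset_union_isBase hbase
  have hSB₂ : S ⊆ B₂ := (subset_union_left.trans (subset_insert _ _)).trans hI₀B₂
  have hP₂sub : B₂ \ S ⊆ M.E \ S := diff_subset_diff_left hB₂.subset_ground
  have hSP₂ : S ∪ (B₂ \ S) = B₂ := union_diff_cancel hSB₂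
  have hqS : q ∉ S := fun h ↦ hqB (Or.inl h)
  have hqP : q ∉ P := fun h ↦ hqB (Or.inr h)
  have hqP₂ : q ∈ B₂ \ S := ⟨hI₀B₂ (mem_insert _ _), hqS⟩
  rcases hlex (B₂ \ S) hP₂sub (by rw [hSP₂]; exact hB₂) with heq | ⟨l, hl, hlP⟩
  · exact hqP (by rw [heq]; exact hqP₂)
  · have hlP₂ : l ∈ P \ (B₂ \ S) := by
      rcases hl.1 with h | h
      · exact h
      · exact absurd hlP h.2
    have hlq : l ≤ q := hl.2 (Or.inr ⟨hqP₂, hqP⟩)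
    have hlneq : l ≠ q := fun h ↦ hqP (h ▸ hlP)
    have : l ∈ B₂ :=
      hI₀B₂ (mem_insert_of_mem _ (Or.inr ⟨hlP, lt_of_le_of_ne hlq hlneq⟩))
    exact hlP₂.2 ⟨this, (hPsub hlP).2⟩

/-- If `P` is the lexicographically smallest set such that `B = S ∪ P` is a basis, then
`IA(B) = IA(S) ∪ P`. -/
theorem stmt10 [LinearOrder α] (M : Matroid α) (S P : Set α) (hS : M.Indep S)
    (hPsub : P ⊆ M.E \ S) (hbase : M.IsBase (S ∪ P))
    (hlex : ∀ P', P' ⊆ M.E \ S → M.IsBase (S ∪ P') → LexLE P P') :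
    {i | M.IntActive (S ∪ P) i} =
      {e | e ∈ S ∧ ∃ C, M✶.Circuit' C ∧ C ⊆ insert e (M.E \ S) ∧ IsLeast C e} ∪ P := by
  ext i
  simp only [mem_setOf_eq, mem_union, IntActive]
  constructor
  · rintro ⟨hiB, C, hC, hCsub, hCle⟩
    rcases hiB with hiS | hiP
    · exact Or.inl ⟨hiS, C, hC,
        hCsub.trans (insert_subset_insert (diff_subset_diff_right subset_union_left)), hCle⟩
    · exact Or.inr hiP
  · intro h
    have hiB : i ∈ S ∪ P := by
      rcases h with ⟨h1, -⟩ | h2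
      exacts [Or.inl h1, Or.inr h2]
    set B : Set α := S ∪ P with hBdef
    have hBdiff : B \ {i} ⊆ M.closure (B \ {i}) :=
      M.subset_closure _ (diff_subset.trans hbase.subset_ground)
    have hK : M✶.Circuit' (M.E \ M.closure (B \ {i})) := aux_fund_cocirc hbase hiB
    set K := M.E \ M.closure (B \ {i}) with hKdef
    have hiK : i ∈ K :=
      ⟨hbase.subset_ground hiB,
        (indep_iff_forall_notMem_closure_diff hbase.subset_ground).mp hbase.indep hiB⟩
    have hKsub : K ⊆ insert i (M.E \ B) := by
      intro x hx
      by_cases hxB : x ∈ B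
      · rcases eq_or_ne x i with rfl | hxi
        · exact mem_insert _ _
        · exact absurd (hBdiff ⟨hxB, hxi⟩) hx.2
      · exact mem_insert_of_mem _ ⟨hx.1, hxB⟩
    refine ⟨hiB, K, hK, hKsub, hiK, ?_⟩
    intro f hf
    by_contra hfi
    push_neg at hfi
    have hfB : f ∉ B := fun hh ↦ hf.2 (hBdiff ⟨hh, ne_of_lt hfi⟩)
    rcases h with ⟨hiS, C, hC, hCsub, hCle⟩ | hiP
    · -- case `i ∈ S` : use the given cocircuit `C` and the exchange argument
      have hfC : f ∉ C := fun hh ↦ absurd (hCle.2 hh) (not_le.mpr hfi)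
      have hfBd : f ∉ B \ {i} := fun hh ↦ hfB hh.1
      have hindB' : M.Indep (insert f (B \ {i})) := by
        rw [(hbase.indep.diff {i}).insert_indep_iff_of_notMem hfBd]
        exact hf
      have hB' : M.IsBase (insert f (B \ {i})) := hbase.exchange_isBase_of_indep hfB hindB'
      set B' := insert f (B \ {i}) with hB'def
      have hiB' : i ∉ B' := by
        rintro (hh | hh)
        · exact absurd hh.symm (ne_of_lt hfi)
        · exact hh.2 rfl
      set J := B' \ C with hJdef
      have hJcl : M.closure J ⊆ M.closure (M.E \ C) :=
        M.closure_subset_closure (diff_subset_diff_left hB'.subset_ground)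
      have hiJ : i ∉ M.closure J := fun hh ↦ aux_cocirc_flat M hC hCle.1 (hJcl hh)
      have hJind : M.Indep J := hB'.indep.subset diff_subset
      have hindI₁ : M.Indep (insert i J) := by
        rw [hJind.insert_indep_iff_of_notMem (fun hh ↦ hiB' hh.1)]
        exact ⟨hbase.subset_ground hiB, hiJ⟩
      obtain ⟨B'', hB'', hI₁B'', hB''sub⟩ := hindI₁.exists_isBase_subset_union_isBase hB'
      have hunion : insert i J ∪ B' = insert i B' := by
        rw [insert_union, union_eq_self_of_subset_left (diff_subset : J ⊆ B')]
      rw [hunion] at hB''sub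
      set X := insert i B' \ B'' with hXdef
      have hiB'' : i ∈ B'' := hI₁B'' (mem_insert _ _)
      have hXne : X.Nonempty := by
        rw [nonempty_iff_ne_empty]
        intro hXe
        have hsub : insert i B' ⊆ B'' := by rwa [hXdef, diff_eq_empty] at hXe
        exact (hB'.insert_dep ⟨hbase.subset_ground hiB, hiB'⟩).not_indep
          (hB''.indep.subset hsub)
      have hXC : ∀ x ∈ X, x ∈ C ∧ x ∈ B' := by
        intro x hx
        have hxi : x ≠ i := fun hh ↦ hx.2 (hh ▸ hiB'')
        have hxB' : x ∈ B' := hx.1.resolve_left hxi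
        refine ⟨?_, hxB'⟩
        by_contra hxC
        exact hx.2 (hI₁B'' (mem_insert_of_mem _ ⟨hxB', hxC⟩))
      have hXP : ∀ x ∈ X, x ∈ P ∧ i < x := by
        intro x hx
        obtain ⟨hxC, hxB'⟩ := hXC x hx
        have hxi : x ≠ i := fun hh ↦ hx.2 (hh ▸ hiB'')
        have hxf : x ≠ f := fun hh ↦ hfC (hh ▸ hxC)
        have hxB : x ∈ B := (hxB'.resolve_left hxf).1
        have hxS : x ∉ S := fun hxS ↦ ((hCsub hxC).resolve_left hxi).2 hxS
        have hxP : x ∈ P := hxB.resolve_left hxS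
        exact ⟨hxP, lt_of_le_of_ne (hCle.2 hxC) (Ne.symm hxi)⟩
      have hiBins : insert i B' = insert f B := by
        rw [hB'def, insert_comm, insert_diff_singleton, insert_eq_of_mem hiB]
      have hB''ub : B'' ⊆ insert f B := hiBins ▸ hB''sub
      have hSX : ∀ x ∈ X, x ∉ S := fun x hx hxS ↦ (hPsub (hXP x hx).1).2 hxS
      have hSB'' : S ⊆ B'' := by
        intro s hsS
        by_contra hsB''
        have hsX : s ∈ X := ⟨hiBins ▸ (mem_insert_of_mem _ (Or.inl hsS)), hsB''⟩
        exact hSX s hsX hsS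
      have hSP₃ : S ∪ (B'' \ S) = B'' := union_diff_cancel hSB''
      have hfX : f ∉ X := fun hh ↦ hfC (hXC f hh).1
      have hfB'' : f ∈ B'' := by
        by_contra hh
        exact hfX ⟨hiBins ▸ (mem_insert _ _), hh⟩
      have hfS : f ∉ S := fun hh ↦ hfB (Or.inl hh)
      have hfP : f ∉ P := fun hh ↦ hfB (Or.inr hh)
      have hfP₃ : f ∈ B'' \ S := ⟨hfB'', hfS⟩
      rcases hlex (B'' \ S) (diff_subset_diff_left hB''.subset_ground)
        (by rw [hSP₃]; exact hB'') with heq | ⟨l, hl, hlP⟩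
      · exact hfP (by rw [heq]; exact hfP₃)
      · have hlf : l ≤ f := hl.2 (Or.inr ⟨hfP₃, hfP⟩)
        have hlPd : l ∈ P \ (B'' \ S) := by
          rcases hl.1 with hh | hh
          · exact hh
          · exact absurd hlP hh.2
        have hlB : l ∈ B := Or.inr hlPd.1
        have hlS : l ∉ S := (hPsub hlPd.1).2
        have hlB'' : l ∉ B'' := fun hh ↦ hlPd.2 ⟨hh, hlS⟩
        have hlX : l ∈ X := ⟨hiBins ▸ (mem_insert_of_mem _ hlB), hlB''⟩
        exact absurd (lt_of_le_of_lt hlf hfi) (not_lt.mpr (le_of_lt (hXP l hlX).2))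
    · -- case `i ∈ P` : use the greedy spanning property
      have hG := aux_lexmin_spans M S P hPsub hbase hlex hf.1 hfB
      have hsub2 : S ∪ {x ∈ P | x < f} ⊆ B \ {i} := by
        rintro y (hyS | ⟨hyP, hyf⟩)
        · exact ⟨Or.inl hyS, fun hh ↦ (hPsub hiP).2 (hh ▸ hyS)⟩
        · exact ⟨Or.inr hyP, fun hh ↦ absurd (hh ▸ hyf) (not_lt.mpr (le_of_lt hfi))⟩
      exact hf.2 (M.closure_subset_closure hsub2 hG)

end Matroid
end

section
/- Let M be a loopless matroid of rank r+1 on linearly ordered ground set E, and B an nbc basis with IA(B) = {c₁ > ⋯ > c_{k+1}}, S = B − IA(B), T = (E−B) − min(E−B). Let i be the largest index such that c_i ∉ cl(S) ∪ cl*(T). Then i is also the smallest index such that cl(S ∪ {c₁, …, c_i}) ∪ cl*(T) = E. -/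
open Set

variable {α : Type*}

namespace Matroid

/-- If `e ∈ M.E` is not in the closure of `X`, then it lies in the dual closure of the
complement of `insert e X`. -/
lemma mem_dual_closure_compl_of_not_mem_closure (M : Matroid α) {e : α} {X : Set α}
    (heE : e ∈ M.E) (hX : X ⊆ M.E) (he : e ∉ M.closure X) :
    e ∈ M✶.closure (M.E \ insert e X) := by
  have heX : e ∉ X := fun h => he (M.subset_closure X hX h)
  by_contra hcon
  set Z := M.E \ insert e X with hZdef
  have hZE : Z ⊆ M✶.E := diff_subset
  obtain ⟨J, hJ⟩ := M✶.exists_isBasis Z hZE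
  have heJ : e ∉ M✶.closure J := by rw [hJ.closure_eq_closure]; exact hcon
  have heJ' : e ∉ J := fun h => heJ (M✶.subset_closure J (hJ.indep.subset_ground) h)
  have hins : M✶.Indep (insert e J) := by
    rw [hJ.indep.insert_indep_iff]
    exact Or.inl ⟨heE, heJ⟩
  obtain ⟨B₂, hB₂, hJB₂⟩ := hins.exists_isBase_superset
  have hBZ : J = B₂ ∩ Z :=
    hJ.eq_of_subset_indep (hB₂.indep.subset inter_subset_left)
      (subset_inter ((subset_insert e J).trans hJB₂) hJ.subset) inter_subset_right
  have hbasis : M✶.IsBasis (B₂ ∩ Z) Z := hBZ ▸ hJ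
  have h2 := hB₂.compl_inter_isBasis_of_inter_isBasis hbasis
  have hEZ : M✶.E \ Z = insert e X := by
    show M.E \ (M.E \ insert e X) = insert e X
    exact diff_diff_cancel_left (insert_subset heE hX)
  rw [dual_dual, hEZ] at h2
  have hecl : e ∈ M.closure ((M✶.E \ B₂) ∩ insert e X) :=
    h2.subset_closure (mem_insert e X)
  have hsub : (M✶.E \ B₂) ∩ insert e X ⊆ X := by
    rintro y ⟨hy1, hy2⟩
    rcases hy2 with rfl | hy2
    · exact absurd (hJB₂ (mem_insert y J)) hy1.2
    · exact hy2
  exact he (M.closure_subset_closure hsub hecl)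

/-- For an nbc basis `B` with `IA(B) = {c₁ > ⋯ > c_{k+1}}`, `S = B − IA(B)` and
`T = (E−B) − min(E−B)`, the largest index `i` with `c_i ∉ cl(S) ∪ cl*(T)` is also the
smallest index with `cl(S ∪ {c₁,…,c_i}) ∪ cl*(T) = E`. -/
theorem stmt15 [LinearOrder α] (M : Matroid α) (n r k : ℕ) (hE : M.E.Finite)
    (hcard : M.E.ncard = n + 1) (hrank : ∃ B₀, M.IsBase B₀ ∧ B₀.ncard = r + 1)
    (h0 : M.NoLoops) (h1 : M.NoColoops)
    (B : Set α) (hB : M.IsBase B) (hnbc : ∀ i, ¬ M.ExtActive B i)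
    (c : Fin (k+1) → α) (hc : StrictAnti c)
    (hcIA : Set.range c = {i | M.IntActive B i})
    (S T : Set α) (hS : S = B \ {i | M.IntActive B i})
    (x : α) (hx : IsLeast (M.E \ B) x) (hT : T = (M.E \ B) \ {x})
    (i : Fin (k+1))
    (hi : c i ∉ M.closure S ∪ M✶.closure T)
    (hi' : ∀ j, i < j → c j ∈ M.closure S ∪ M✶.closure T) :
    (M.closure (S ∪ c '' {j | j ≤ i}) ∪ M✶.closure T = M.E) ∧
      ∀ j : Fin (k+1), M.closure (S ∪ c '' {l | l ≤ j}) ∪ M✶.closure T = M.E → i ≤ j := by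
  have hBE : B ⊆ M.E := hB.subset_ground
  have hSE : S ⊆ M.E := by rw [hS]; exact diff_subset.trans hBE
  have hTE : T ⊆ M.E := by rw [hT]; exact diff_subset.trans diff_subset
  have hcB : ∀ l, c l ∈ B := by
    intro l
    have h1 : c l ∈ {i | M.IntActive B i} := hcIA ▸ mem_range_self l
    exact h1.1
  set A := S ∪ c '' {j | j ≤ i} with hA
  have hAE : A ⊆ M.E := by
    apply union_subset hSE
    rintro _ ⟨l, -, rfl⟩
    exact hBE (hcB l)
  set F := M.closure A with hF
  set G := M✶.closure T with hG
  have hFE : F ⊆ M.E := M.closure_subset_ground A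
  have hGE : G ⊆ M.E := M✶.closure_subset_ground T
  have hxE : x ∈ M.E := hx.1.1
  have hcover : M.E \ {x} ⊆ F ∪ G := by
    rintro e ⟨heE, hex⟩
    rw [mem_singleton_iff] at hex
    by_cases heB : e ∈ B
    · by_cases heI : M.IntActive B e
      · have : e ∈ Set.range c := by rw [hcIA]; exact heI
        obtain ⟨l, rfl⟩ := this
        by_cases hl : l ≤ i
        · exact Or.inl (M.subset_closure A hAE (Or.inr ⟨l, hl, rfl⟩))
        · rcases hi' l (lt_of_not_ge hl) with h | h
          · exact Or.inl (M.closure_subset_closure subset_union_left h)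
          · exact Or.inr h
      · exact Or.inl (M.subset_closure A hAE (Or.inl (by rw [hS]; exact ⟨heB, heI⟩)))
    · refine Or.inr (M✶.subset_closure T hTE ?_)
      rw [hT]
      exact ⟨⟨heE, heB⟩, hex⟩
  have main : F ∪ G = M.E := by
    by_contra hne
    have hsub : F ∪ G ⊆ M.E := union_subset hFE hGE
    have hxFG : x ∉ F ∪ G := by
      intro hxFG
      apply hne
      refine hsub.antisymm fun y hy => ?_
      by_cases hyx : y = x
      · rw [hyx]; exact hxFG
      · exact hcover ⟨hy, hyx⟩
    have hxF : x ∉ M.closure F := by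
      rw [hF, M.closure_closure]
      exact fun h => hxFG (Or.inl h)
    have hkey := M.mem_dual_closure_compl_of_not_mem_closure hxE hFE hxF
    have hsub2 : M.E \ insert x F ⊆ G := by
      rintro y ⟨hyE, hy⟩
      have hyx : y ≠ x := fun h => hy (h ▸ mem_insert _ _)
      rcases hcover ⟨hyE, hyx⟩ with h | h
      · exact absurd (mem_insert_of_mem _ h) hy
      · exact h
    have hxG : x ∈ M✶.closure G := M✶.closure_subset_closure hsub2 hkey
    rw [hG, M✶.closure_closure] at hxG
    exact hxFG (Or.inr hxG)
  refine ⟨main, ?_⟩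
  intro j hj
  by_contra hij
  push_neg at hij
  have hciB : c i ∈ B := hcB i
  have hciE : c i ∈ M.E := hBE hciB
  have hmem : c i ∈ M.closure (S ∪ c '' {l | l ≤ j}) ∪ M✶.closure T := hj ▸ hciE
  have hciG : c i ∉ M✶.closure T := fun h => hi (Or.inr h)
  have hciF' : c i ∈ M.closure (S ∪ c '' {l | l ≤ j}) := hmem.resolve_right hciG
  have hsub3 : S ∪ c '' {l | l ≤ j} ⊆ B \ {c i} := by
    rintro y (hy | ⟨l, hl, rfl⟩)
    · rw [hS] at hy
      refine ⟨hy.1, fun h => hy.2 ?_⟩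
      rw [mem_singleton_iff] at h
      rw [h]
      exact (show c i ∈ {i | M.IntActive B i} from hcIA ▸ mem_range_self i)
    · refine ⟨hcB l, ?_⟩
      rw [mem_singleton_iff]
      exact hc.injective.ne (lt_of_le_of_lt hl hij).ne
  have hfin : c i ∈ M.closure (B \ {c i}) := M.closure_subset_closure hsub3 hciF'
  exact hB.indep.notMem_closure_sdiff_of_mem hciB hfin

end Matroid
end

section
/- Let M be a loopless, coloopless matroid on linearly ordered ground set E, B an nbc basis, and e ∈ B − IA(B) (an internally passive element of B). Then e ∉ cl(IP(B)_{>e}) ∪ cl*((E−B)_{>e}), where IP(B) = B − IA(B), and for a set X, X_{>e} denotes {x ∈ X : x > e}. Moreover, e = max( E − cl(IP(B)_{>e}) − cl*((E−B)_{>e}) ). -/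
open Set

variable {α : Type*}

namespace Matroid

/-- In a circuit (`Circuit'`), every element lies in the closure of the rest. -/
lemma Circuit'.mem_closure_diff {M : Matroid α} {C : Set α} (hC : M.Circuit' C) {f : α}
    (hf : f ∈ C) : f ∈ M.closure (C \ {f}) := by
  obtain ⟨hCE, hdep, hmin⟩ := hC
  have hDindep : M.Indep (C \ {f}) := hmin _ (sdiff_singleton_ssubset.2 hf)
  by_contra hcl
  have : M.Indep (insert f (C \ {f})) :=
    (hDindep.insert_indep_iff_of_notMem (by simp)).2 ⟨hCE hf, hcl⟩
  rw [insert_diff_singleton, insert_eq_of_mem hf] at this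
  exact hdep this

/-- Fundamental circuit: if `I` is independent and `e ∈ cl(I) \ I`, there is a circuit
through `e` inside `insert e I`. -/
lemma exists_circuit'_of_mem_closure {M : Matroid α} {I : Set α} {e : α} (hI : M.Indep I)
    (he : e ∈ M.closure I) (heI : e ∉ I) :
    ∃ C, M.Circuit' C ∧ e ∈ C ∧ C ⊆ insert e I := by
  have heE : e ∈ M.E := M.closure_subset_ground I he
  set Js : Set (Set α) := {J | J ⊆ I ∧ e ∈ M.closure J} with hJs
  have hne : Js.Nonempty := ⟨I, Subset.rfl, he⟩
  set I₀ : Set α := ⋂₀ Js with hI₀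
  have hI₀I : I₀ ⊆ I := sInter_subset_of_mem ⟨Subset.rfl, he⟩
  have hI₀indep : M.Indep I₀ := hI.subset hI₀I
  have heI₀ : e ∈ M.closure I₀ := by
    rw [hI₀, hI.closure_sInter_eq_biInter_closure_of_forall_subset hne (fun J hJ => hJ.1)]
    exact mem_iInter₂.2 fun J hJ => hJ.2
  have heI₀' : e ∉ I₀ := fun h => heI (hI₀I h)
  refine ⟨insert e I₀, ⟨?_, ?_, ?_⟩, mem_insert _ _, insert_subset_insert hI₀I⟩
  · exact insert_subset heE (hI₀I.trans hI.subset_ground)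
  · intro hind
    have := (hI₀indep.insert_indep_iff_of_notMem heI₀').1 hind
    exact this.2 heI₀
  · intro D hD
    by_cases heD : e ∈ D
    · have hD' : D \ {e} ⊂ I₀ := by
        obtain ⟨x, hxC, hxD⟩ := exists_of_ssubset hD
        have hxe : x ≠ e := fun h => hxD (h ▸ heD)
        have hxI₀ : x ∈ I₀ := (mem_insert_iff.1 hxC).resolve_left hxe
        refine ssubset_iff_of_subset ?_ |>.2 ⟨x, hxI₀, fun hx => hxD hx.1⟩
        intro y hy
        rcases mem_insert_iff.1 (hD.subset hy.1) with h | h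
        · exact absurd h hy.2
        · exact h
      have hD'indep : M.Indep (D \ {e}) := hI₀indep.subset hD'.subset
      have hnotcl : e ∉ M.closure (D \ {e}) := by
        intro hcl
        have hmem : D \ {e} ∈ Js := ⟨hD'.subset.trans hI₀I, hcl⟩
        exact hD'.not_subset (sInter_subset_of_mem hmem)
      have : M.Indep (insert e (D \ {e})) :=
        (hD'indep.insert_indep_iff_of_notMem (by simp)).2 ⟨heE, hnotcl⟩
      rwa [insert_diff_singleton, insert_eq_of_mem heD] at this
    · have : D ⊆ I₀ := fun y hy => ((mem_insert_iff.1 (hD.subset hy)).resolve_left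
        (fun h => heD (h ▸ hy)))
      exact hI₀indep.subset this

/-- For an internally passive element `e` of an nbc basis `B`:
`e ∉ cl(IP(B)_{>e}) ∪ cl*((E−B)_{>e})`, and moreover
`e = max(E − cl(IP(B)_{>e}) − cl*((E−B)_{>e}))`. -/
theorem stmt16 [LinearOrder α] (M : Matroid α) (h0 : M.NoLoops) (h1 : M.NoColoops)
    (B : Set α) (hB : M.IsBase B) (hnbc : ∀ i, ¬ M.ExtActive B i)
    (e : α) (he : e ∈ B \ {i | M.IntActive B i}) :
    (e ∉ M.closure {y ∈ B \ {i | M.IntActive B i} | e < y} ∪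
        M✶.closure {y ∈ M.E \ B | e < y}) ∧
    IsGreatest ((M.E \ M.closure {y ∈ B \ {i | M.IntActive B i} | e < y}) \
        M✶.closure {y ∈ M.E \ B | e < y}) e := by
  obtain ⟨heB, heIA⟩ := he
  have heE : e ∈ M.E := hB.subset_ground heB
  set X1 : Set α := {y ∈ B \ {i | M.IntActive B i} | e < y} with hX1
  set X2 : Set α := {y ∈ M.E \ B | e < y} with hX2
  have hX1sub : X1 ⊆ B \ {e} := fun y hy => ⟨hy.1.1, fun h => lt_irrefl e (by
    simpa [mem_singleton_iff.1 h] using hy.2)⟩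
  have hX2sub : X2 ⊆ M.E \ B := fun y hy => hy.1
  have hX2indep : M✶.Indep X2 := hB.compl_isBase_dual.indep.subset hX2sub
  have heX2 : e ∉ X2 := fun h => h.1.2 heB
  -- e not in M.closure X1
  have hecl1 : e ∉ M.closure X1 := fun h =>
    hB.indep.notMem_closure_sdiff_of_mem heB (M.closure_subset_closure hX1sub h)
  -- e not in M✶.closure X2
  have hecl2 : e ∉ M✶.closure X2 := by
    intro h
    obtain ⟨C, hC, heC, hCsub⟩ := exists_circuit'_of_mem_closure hX2indep h heX2
    refine heIA ⟨heB, C, hC, hCsub.trans (insert_subset_insert hX2sub), heC, fun x hx => ?_⟩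
    rcases mem_insert_iff.1 (hCsub hx) with h' | h'
    · exact h'.ge
    · exact (h'.2).le
  refine ⟨fun h => h.elim hecl1 hecl2, ⟨⟨heE, hecl1⟩, hecl2⟩, fun f hf => ?_⟩
  by_contra hfe
  push_neg at hfe
  obtain ⟨⟨hfE, hf1⟩, hf2⟩ := hf
  by_cases hfB : f ∈ B
  · by_cases hfIA : M.IntActive B f
    · -- f internally active: f ∈ cl* of its fundamental cocircuit minus f, all > e
      obtain ⟨-, C, hC, hCsub, hfC, hleast⟩ := hfIA
      have hmem : f ∈ M✶.closure (C \ {f}) := hC.mem_closure_diff hfC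
      have hsub : C \ {f} ⊆ X2 := by
        intro x hx
        have hxEB : x ∈ M.E \ B := (mem_insert_iff.1 (hCsub hx.1)).resolve_left hx.2
        exact ⟨hxEB, lt_of_lt_of_le hfe (hleast hx.1)⟩
      exact hf2 (M✶.closure_subset_closure hsub hmem)
    · -- f internally passive: f ∈ X1
      exact hf1 (M.subset_closure X1 (hX1sub.trans (diff_subset.trans hB.subset_ground))
        ⟨⟨hfB, hfIA⟩, hfe⟩)
  · -- f outside B: f ∈ X2
    have : f ∈ X2 := ⟨⟨hfE, hfB⟩, hfe⟩
    exact hf2 (M✶.subset_closure X2 (hX2sub.trans (by simp [diff_subset])) this)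

end Matroid
end

section
/- Let M be a loopless, coloopless matroid on linearly ordered ground set E, B an nbc basis, and e ∈ (E−B) − min(E−B). Then e ∉ cl(IP(B)_{>e}) ∪ cl*((E−B)_{>e}), and furthermore e = max( E − cl(IP(B)_{>e}) − cl*((E−B)_{>e}) ), where IP(B) = B − IA(B). -/
open Set

variable {α : Type*}

namespace Matroid

lemma exists_circuit'_aux (M : Matroid α) {X : Set α} {e : α}
    (hX : M.Indep X) (heX : e ∉ X) (he : e ∈ M.closure X) :
    ∃ C, M.Circuit' C ∧ C ⊆ insert e X ∧ e ∈ C := by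
  classical
  set J : Set α := {x ∈ X | e ∈ M.closure (X \ {x})} with hJ
  set C : Set α := insert e (X \ J) with hC
  have heE : e ∈ M.E := M.closure_subset_ground X he
  have hXJ : X \ J ⊆ X := diff_subset
  have hXJi : M.Indep (X \ J) := hX.subset hXJ
  have heXJ : e ∈ M.closure (X \ J) := by
    rcases J.eq_empty_or_nonempty with h | hne
    · rw [hC] at *
      rw [h] at *
      simpa using he
    · have hcl : M.closure (⋂ x ∈ J, X \ {x}) = ⋂ x ∈ J, M.closure (X \ {x}) :=
        closure_biInter_eq_biInter_closure_of_biUnion_indep hne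
          (hX.subset (by simp only [iUnion_subset_iff]; exact fun i _ => diff_subset))
      have hEq : (⋂ x ∈ J, X \ {x}) = X \ J := by
        ext y
        simp only [mem_iInter, mem_diff, mem_singleton_iff]
        constructor
        · intro h
          obtain ⟨x0, hx0⟩ := hne
          exact ⟨(h x0 hx0).1, fun hyJ => (h y hyJ).2 rfl⟩
        · rintro ⟨hyX, hyJ⟩ x hxJ
          exact ⟨hyX, fun h => hyJ (h ▸ hxJ)⟩
      rw [← hEq, hcl, mem_iInter₂]
      exact fun x hx => hx.2
  have heXJ' : e ∉ X \ J := fun h => heX (hXJ h)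
  have hdep : M.Dep C := hXJi.insert_dep_iff.mpr ⟨heXJ, heXJ'⟩
  refine ⟨C, ⟨hdep.subset_ground, hdep.not_indep, ?_⟩,
    insert_subset_insert hXJ, mem_insert _ _⟩
  intro D hD
  by_cases heD : e ∈ D
  · obtain ⟨x, hxC, hxD⟩ := exists_of_ssubset hD
    have hxe : x ≠ e := fun h => hxD (h ▸ heD)
    have hxXJ : x ∈ X \ J := ((mem_insert_iff.1 hxC).resolve_left hxe)
    have hsub : (X \ J) \ {x} ⊆ X \ {x} := fun y hy => ⟨(hXJ hy.1), hy.2⟩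
    have hXxi : M.Indep ((X \ J) \ {x}) := hXJi.subset diff_subset
    have hind : M.Indep (insert e ((X \ J) \ {x})) := by
      rw [hXxi.insert_indep_iff_of_notMem (fun h => heX (hXJ h.1))]
      refine ⟨heE, fun hcl => ?_⟩
      have : e ∈ M.closure (X \ {x}) := M.closure_subset_closure hsub hcl
      exact hxXJ.2 ⟨hxXJ.1, this⟩
    refine hind.subset (fun y hy => ?_)
    rcases mem_insert_iff.1 (hD.subset hy) with rfl | hyXJ
    · exact mem_insert _ _
    · exact mem_insert_of_mem _ ⟨hyXJ, fun h => hxD (h ▸ hy)⟩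
  · refine hX.subset (fun y hy => ?_)
    rcases mem_insert_iff.1 (hD.subset hy) with rfl | hyXJ
    · exact absurd hy heD
    · exact hXJ hyXJ

/-- For `e ∈ (E−B) − min(E−B)` with `B` an nbc basis:
`e ∉ cl(IP(B)_{>e}) ∪ cl*((E−B)_{>e})`, and moreover
`e = max(E − cl(IP(B)_{>e}) − cl*((E−B)_{>e}))`. -/
theorem stmt17 [LinearOrder α] (M : Matroid α) (h0 : M.NoLoops) (h1 : M.NoColoops)
    (B : Set α) (hB : M.IsBase B) (hnbc : ∀ i, ¬ M.ExtActive B i)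
    (x : α) (hx : IsLeast (M.E \ B) x)
    (e : α) (he : e ∈ (M.E \ B) \ {x}) :
    (e ∉ M.closure {y ∈ B \ {i | M.IntActive B i} | e < y} ∪
        M✶.closure {y ∈ M.E \ B | e < y}) ∧
    IsGreatest ((M.E \ M.closure {y ∈ B \ {i | M.IntActive B i} | e < y}) \
        M✶.closure {y ∈ M.E \ B | e < y}) e := by
  obtain ⟨⟨heE, heB⟩, hex⟩ := he
  have hPB : {y ∈ B \ {i | M.IntActive B i} | e < y} ⊆ B := fun y hy => hy.1.1
  have hPE : {y ∈ B \ {i | M.IntActive B i} | e < y} ⊆ M.E := hPB.trans hB.subset_ground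
  have hQE : {y ∈ M.E \ B | e < y} ⊆ M.E := fun y hy => hy.1.1
  have hBd : M✶.IsBase (M.E \ B) := hB.compl_isBase_dual
  have hecl : e ∉ M.closure {y ∈ B \ {i | M.IntActive B i} | e < y} := by
    intro hecl
    obtain ⟨C, hC, hCsub, heC⟩ := exists_circuit'_aux M (hB.indep.subset hPB)
      (fun h => heB (hPB h)) hecl
    refine hnbc e ⟨⟨heE, heB⟩, C, hC, hCsub.trans (insert_subset_insert hPB), heC, ?_⟩
    intro y hy
    rcases mem_insert_iff.1 (hCsub hy) with rfl | h
    · exact le_refl _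
    · exact h.2.le
  have hecl' : e ∉ M✶.closure {y ∈ M.E \ B | e < y} := by
    have hQind : M✶.Indep {y ∈ M.E \ B | e < y} := hBd.indep.subset (fun y hy => hy.1)
    intro h
    rw [hQind.mem_closure_iff_of_notMem (fun hyQ => lt_irrefl e hyQ.2)] at h
    exact h.not_indep (hBd.indep.subset (insert_subset ⟨heE, heB⟩ fun y hy => hy.1))
  refine ⟨fun h => (mem_union _ _ _).1 h |>.elim hecl hecl', ⟨⟨heE, hecl⟩, hecl'⟩, ?_⟩
  intro f hf
  by_contra hfe
  push_neg at hfe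
  obtain ⟨⟨hfE, hfP⟩, hfQ⟩ := hf
  by_cases hfB : f ∈ B
  · by_cases hfIA : M.IntActive B f
    · obtain ⟨-, C, hC, hCsub, hCleast⟩ := hfIA
      apply hfQ
      have hfC : f ∈ C := hCleast.1
      have hCfss : C \ {f} ⊂ C := ⟨diff_subset, fun h => (h hfC).2 rfl⟩
      have hCf : M✶.Indep (C \ {f}) := hC.2.2 _ hCfss
      have hmem : f ∈ M✶.closure (C \ {f}) := by
        have hdep : M✶.Dep (insert f (C \ {f})) := by
          rw [insert_diff_singleton, insert_eq_self.2 hfC]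
          exact ⟨hC.2.1, hC.1⟩
        exact (hCf.insert_dep_iff.1 hdep).1
      refine M✶.closure_subset_closure ?_ hmem
      rintro y ⟨hyC, hyf⟩
      rcases mem_insert_iff.1 (hCsub hyC) with rfl | hy
      · exact absurd rfl hyf
      · exact ⟨hy, lt_of_lt_of_le hfe (hCleast.2 hyC)⟩
    · exact hfP (M.mem_closure_of_mem ⟨⟨hfB, hfIA⟩, hfe⟩ hPE)
  · exact hfQ (M✶.mem_closure_of_mem ⟨⟨hfE, hfB⟩, hfe⟩ hQE)


end Matroid
end

section
/- Let M be a loopless, coloopless matroid with dual M*, and B a basis of M with internally active set IA(B) = {c₁ > ⋯ > c_{k+1}}, S = B − IA(B). For each p ∈ IA(B), let H(p) be the hyperplane of M complementary to the fundamental cocircuit C*(B,p). Then cl(S) equals the intersection of the hyperplanes H(p) over all p ∈ IA(B). -/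
open Set

variable {α : Type*}

namespace Matroid

/-- `cl(B − IA(B))` is the intersection of the hyperplanes `H(p) = E − C*(B,p)` over the
internally active elements `p` of the basis `B`. -/
theorem stmt18 [LinearOrder α] (M : Matroid α) (k : ℕ) (hE : M.E.Finite)
    (h0 : M.NoLoops) (h1 : M.NoColoops)
    (B : Set α) (hB : M.IsBase B)
    (hIA : {i | M.IntActive B i}.ncard = k + 1)
    (K : α → Set α)
    (hK : ∀ p ∈ {i | M.IntActive B i},
      M✶.Circuit' (K p) ∧ K p ⊆ insert p (M.E \ B) ∧ IsLeast (K p) p) :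
    M.closure (B \ {i | M.IntActive B i}) = ⋂ p ∈ {i | M.IntActive B i}, (M.E \ K p) := by
  set T := {i | M.IntActive B i} with hT
  have hTne : T.Nonempty := Set.nonempty_of_ncard_ne_zero (by rw [hIA]; simp)
  have key : ∀ p ∈ T, M.closure (B \ {p}) = M.E \ K p := by
    intro p hp
    obtain ⟨hC, hCsub, hCleast⟩ := hK p hp
    obtain ⟨hCE, hCdep, hCmin⟩ := hC
    have hCE : K p ⊆ M.E := hCE
    have hpB : p ∈ B := hp.1
    have hpC : p ∈ K p := hCleast.1
    have hCB : ∀ y ∈ K p, y ∈ B → y = p := by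
      intro y hy hyB
      rcases hCsub hy with h | h
      · exact h
      · exact absurd hyB h.2
    have hBp_sub : B \ {p} ⊆ M.E \ K p := by
      intro y hy
      exact ⟨hB.subset_ground hy.1, fun hyC => hy.2 (hCB y hyC hy.1)⟩
    apply subset_antisymm
    · -- closure (B \ {p}) ⊆ E \ K p
      intro x hx
      refine ⟨M.closure_subset_ground _ hx, fun hxC => ?_⟩
      have hxE : x ∈ M.E := hCE hxC
      have hx' : x ∈ M.closure (M.E \ K p) := M.closure_subset_closure hBp_sub hx
      have hind : M✶.Indep (K p \ {x}) := hCmin _ (sdiff_singleton_ssubset.2 hxC)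
      have hsp : M.Spanning (M.E \ (K p \ {x})) := Coindep.compl_spanning hind
      have heq : M.E \ (K p \ {x}) = insert x (M.E \ K p) := by
        rw [Set.diff_diff_right,
          Set.inter_eq_self_of_subset_right (singleton_subset_iff.2 hxE), union_singleton]
      rw [heq] at hsp
      have hclE : M.closure (M.E \ K p) = M.E := by
        rw [← closure_insert_eq_of_mem_closure hx', hsp.closure_eq]
      have hsp2 : M.Spanning (M.E \ K p) :=
        (spanning_iff_closure_eq diff_subset).mpr hclE
      have hco : M.Coindep (K p) := by
        have := (spanning_iff_compl_coindep diff_subset).mp hsp2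
        rwa [diff_diff_cancel_left hCE] at this
      exact hCdep hco
    · -- E \ K p ⊆ closure (B \ {p})
      intro x hx
      by_contra hxcl
      have hxB : x ∉ B := by
        intro hxB
        rcases eq_or_ne x p with rfl | hne
        · exact hx.2 hpC
        · exact hxcl (M.mem_closure_of_mem ⟨hxB, hne⟩
            ((diff_subset).trans hB.subset_ground))
      have hxBp : x ∉ B \ {p} := fun h => hxB h.1
      have hind : M.Indep (insert x (B \ {p})) :=
        ((hB.indep.subset diff_subset).notMem_closure_iff_of_notMem hxBp hx.1).mp hxcl
      have hB' : M.IsBase (insert x (B \ {p})) := hB.exchange_isBase_of_indep hxB hind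
      have hdep : M✶.Dep (K p) := ⟨hCdep, by rwa [dual_ground]⟩
      obtain ⟨y, hyC, hyB'⟩ := (dual_dep_iff_forall.mp hdep).1 _ hB'
      rcases hyB' with rfl | hy
      · exact hx.2 hyC
      · exact hy.2 (hCB y hyC hy.1)
  have hBT : B \ T = ⋂ p ∈ T, (B \ {p}) := by
    ext y
    simp only [mem_diff, mem_iInter, mem_singleton_iff]
    constructor
    · rintro ⟨hyB, hyT⟩ p hp
      exact ⟨hyB, fun h => hyT (h ▸ hp)⟩
    · intro h
      obtain ⟨p0, hp0⟩ := hTne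
      exact ⟨(h p0 hp0).1, fun hyT => (h y hyT).2 rfl⟩
  rw [hBT, closure_biInter_eq_biInter_closure_of_biUnion_indep (I := fun p => B \ {p}) hTne
    (hB.indep.subset (iUnion₂_subset fun p _ => diff_subset))]
  exact iInter₂_congr fun p hp => key p hp

end Matroid
end
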